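/- arXiv:0803.1846 — 12 statements merged into one kernel-verified Lean document; each statement's English description precedes it below -/
import Mathlib

section
/- Let ω be a non-negative integrable function on the interval (a,b) with ∫_a^b ω(y) dy = 1, and let L_ω[f] = ∫_a^b f(y) ω(y) dy. Let β be a measurable function on (a,b) with β(y) ≠ 1 on (a,b), such that y^i β(y)^j ω(y) is integrable on (a,b) for all 0 ≤ i, j ≤ n+1. Suppose the (n+1)×(n+1) determinant Δ_n, whose first row is (1, L_ω[y], …, L_ω[y^n]) and whose (i+1)-st row for 1 ≤ i ≤ n is (L_{(β−1)ω}[β^{i−1}], L_{(β−1)ω}[y β^{i−1}], …, L_{(β−1)ω}[y^n β^{i−1}]), is nonzero, where L_{(β−1)ω}[f] = ∫_a^b f(y)(β(y)−1)ω(y) dy. Define the polynomial P_n(x) = (1/Δ_n)·det of the matrix obtained by replacing the first row by (1, x, …, x^n). Then ∫_a^b P_n(y) P_n(β(y)·x) ω(y) dy = P_n(x) for all real x. -/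
open MeasureTheory Set

/-- **Theorem 1** of Dominici, "Polynomial solutions of nonlinear integral equations".
If `β ≠ 1` on `(a,b)` and the determinant `Δₙ` (first row the moments of `ω`, subsequent
rows the moments of `(β-1)ω` against powers of `β`) is nonzero, then the bordered-determinant
polynomial `Pₙ` satisfies `∫ Pₙ(y) Pₙ(β(y)·x) ω(y) dy = Pₙ(x)`. -/
theorem polynomial_solution_beta_det (a b : ℝ) (ω β : ℝ → ℝ) (n : ℕ)
    (hω_nonneg : ∀ y ∈ Ioo a b, 0 ≤ ω y)
    (hω_int : IntegrableOn ω (Ioo a b))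
    (hω_norm : (∫ y in Ioo a b, ω y) = 1)
    (hβ_meas : Measurable β)
    (hβ_ne_one : ∀ y ∈ Ioo a b, β y ≠ 1)
    (h_int : ∀ i j : ℕ, i ≤ n + 1 → j ≤ n + 1 →
      IntegrableOn (fun y => y ^ i * β y ^ j * ω y) (Ioo a b))
    (Δ : ℝ)
    (hΔ : Δ = (Matrix.of fun i j : Fin (n + 1) =>
      if (i : ℕ) = 0 then
        (if (j : ℕ) = 0 then (1 : ℝ) else ∫ y in Ioo a b, y ^ (j : ℕ) * ω y)
      else
        ∫ y in Ioo a b, y ^ (j : ℕ) * β y ^ ((i : ℕ) - 1) * (β y - 1) * ω y).det)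
    (hΔ_ne : Δ ≠ 0)
    (P : ℝ → ℝ)
    (hP : ∀ x : ℝ, P x = (1 / Δ) * (Matrix.of fun i j : Fin (n + 1) =>
      if (i : ℕ) = 0 then x ^ (j : ℕ)
      else
        ∫ y in Ioo a b, y ^ (j : ℕ) * β y ^ ((i : ℕ) - 1) * (β y - 1) * ω y).det) :
    ∀ x : ℝ, (∫ y in Ioo a b, P y * P (β y * x) * ω y) = P x := by
  classical
  -- the constant rows
  set c : ℕ → Fin (n + 1) → ℝ := fun k j =>
    ∫ y in Ioo a b, y ^ (j : ℕ) * β y ^ k * (β y - 1) * ω y with hc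
  -- the bordered matrix with variable first row
  set M : (Fin (n + 1) → ℝ) → Matrix (Fin (n + 1)) (Fin (n + 1)) ℝ := fun r =>
    Matrix.of fun i j => if (i : ℕ) = 0 then r j else c ((i : ℕ) - 1) j with hM
  -- cofactors of the first row
  set D : Fin (n + 1) → ℝ := fun j =>
    (-1 : ℝ) ^ (j : ℕ) * ((M 0).submatrix Fin.succ j.succAbove).det with hD
  have hdet : ∀ r, (M r).det = ∑ j, r j * D j := by
    intro r
    rw [Matrix.det_succ_row_zero]
    refine Finset.sum_congr rfl fun j _ => ?_
    have hsub : (M r).submatrix Fin.succ j.succAbove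
        = (M 0).submatrix Fin.succ j.succAbove := by
      ext i k
      simp [hM, Fin.val_succ]
    rw [hsub]
    simp only [hM, hD, Matrix.of_apply, Fin.val_zero, if_true, eq_self_iff_true]
    ring
  -- P as a polynomial with coefficients D j / Δ
  have hP' : ∀ x : ℝ, P x = (1 / Δ) * ∑ j : Fin (n + 1), x ^ (j : ℕ) * D j := by
    intro x
    rw [hP x]
    congr 1
    have : (Matrix.of fun i j : Fin (n + 1) =>
        if (i : ℕ) = 0 then x ^ (j : ℕ)
        else ∫ y in Ioo a b, y ^ (j : ℕ) * β y ^ ((i : ℕ) - 1) * (β y - 1) * ω y)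
        = M (fun j => x ^ (j : ℕ)) := by
      ext i j; simp [hM, hc]
    rw [this, hdet]
  -- Δ as a combination of the cofactors
  have hΔ' : Δ = ∑ j : Fin (n + 1), (∫ y in Ioo a b, y ^ (j : ℕ) * ω y) * D j := by
    have hmat : (Matrix.of fun i j : Fin (n + 1) =>
        if (i : ℕ) = 0 then
          (if (j : ℕ) = 0 then (1 : ℝ) else ∫ y in Ioo a b, y ^ (j : ℕ) * ω y)
        else ∫ y in Ioo a b, y ^ (j : ℕ) * β y ^ ((i : ℕ) - 1) * (β y - 1) * ω y)
        = M (fun j => if (j : ℕ) = 0 then (1 : ℝ)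
            else ∫ y in Ioo a b, y ^ (j : ℕ) * ω y) := by
      ext i j; simp [hM, hc]
    rw [hΔ, hmat, hdet]
    refine Finset.sum_congr rfl fun j _ => ?_
    congr 1
    by_cases hj : (j : ℕ) = 0
    · rw [if_pos hj, hj]
      rw [← hω_norm]
      simp
    · rw [if_neg hj]
  -- repeated-row determinants vanish
  have hrow0 : ∀ k : ℕ, k + 1 ≤ n → ∑ j, c k j * D j = 0 := by
    intro k hk
    have hdet0 : (M (c k)).det = 0 := by
      refine Matrix.det_zero_of_row_eq (i := 0) (j := ⟨k + 1, by omega⟩) ?_ ?_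
      · intro h
        have := congrArg Fin.val h
        simp at this
      · funext j
        simp [hM]
    rw [hdet (c k)] at hdet0
    exact hdet0
  -- the moment sums
  set T : ℕ → ℝ := fun k => ∑ l : Fin (n + 1),
    D l * ∫ y in Ioo a b, y ^ (l : ℕ) * β y ^ k * ω y with hT
  -- pointwise expansion of P y * β y ^ k * ω y
  have hPval : ∀ k : ℕ, (fun y => P y * β y ^ k * ω y)
      = fun y => ∑ l : Fin (n + 1),
        ((1 / Δ) * D l) * (y ^ (l : ℕ) * β y ^ k * ω y) := by
    intro k
    funext y
    rw [hP' y, Finset.mul_sum, Finset.sum_mul, Finset.sum_mul]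
    exact Finset.sum_congr rfl fun l _ => by ring
  -- integrability of P y * β y ^ k * ω y
  have hPint : ∀ k : ℕ, k ≤ n + 1 →
      IntegrableOn (fun y => P y * β y ^ k * ω y) (Ioo a b) := by
    intro k hk
    rw [hPval k]
    exact integrable_finset_sum _ fun l _ =>
      ((h_int l k (le_trans (Nat.le_of_lt_succ l.isLt) (Nat.le_succ n)) hk).const_mul _)
  -- the value of the moment integrals
  have hIval : ∀ k : ℕ, k ≤ n + 1 →
      (∫ y in Ioo a b, P y * β y ^ k * ω y) = (1 / Δ) * T k := by
    intro k hk
    calc (∫ y in Ioo a b, P y * β y ^ k * ω y)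
        = ∫ y in Ioo a b, ∑ l : Fin (n + 1),
            ((1 / Δ) * D l) * (y ^ (l : ℕ) * β y ^ k * ω y) := by
          rw [← hPval k]
      _ = ∑ l : Fin (n + 1),
            ∫ y in Ioo a b, ((1 / Δ) * D l) * (y ^ (l : ℕ) * β y ^ k * ω y) := by
          exact integral_finset_sum _ fun l _ =>
            ((h_int l k (le_trans (Nat.le_of_lt_succ l.isLt) (Nat.le_succ n)) hk).const_mul _)
      _ = (1 / Δ) * T k := by
          rw [hT, Finset.mul_sum]
          refine Finset.sum_congr rfl fun l _ => ?_
          rw [integral_const_mul]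
          ring
  have hT0 : T 0 = Δ := by
    rw [hΔ', hT]
    refine Finset.sum_congr rfl fun l _ => ?_
    rw [mul_comm]
    congr 1
    refine integral_congr_ae (Filter.Eventually.of_forall fun y => ?_)
    simp
  have hTsucc : ∀ k : ℕ, k + 1 ≤ n → T (k + 1) = T k := by
    intro k hk
    have hsub : ∀ l : Fin (n + 1), c k l
        = (∫ y in Ioo a b, y ^ (l : ℕ) * β y ^ (k + 1) * ω y)
          - ∫ y in Ioo a b, y ^ (l : ℕ) * β y ^ k * ω y := by
      intro l
      calc c k l
          = ∫ y in Ioo a b,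
              (y ^ (l : ℕ) * β y ^ (k + 1) * ω y - y ^ (l : ℕ) * β y ^ k * ω y) := by
            simp only [hc]
            exact integral_congr_ae (Filter.Eventually.of_forall fun y => by ring)
        _ = (∫ y in Ioo a b, y ^ (l : ℕ) * β y ^ (k + 1) * ω y)
              - ∫ y in Ioo a b, y ^ (l : ℕ) * β y ^ k * ω y :=
            integral_sub
              (h_int l (k + 1) (le_trans (Nat.le_of_lt_succ l.isLt) (Nat.le_succ n)) (by omega))
              (h_int l k (le_trans (Nat.le_of_lt_succ l.isLt) (Nat.le_succ n)) (by omega))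
    have h0 := hrow0 k hk
    have : T (k + 1) - T k = ∑ j, c k j * D j := by
      rw [hT, ← Finset.sum_sub_distrib]
      refine Finset.sum_congr rfl fun l _ => ?_
      rw [hsub l]
      ring
    have h2 := this.trans h0
    linarith
  have hTn : ∀ k : ℕ, k ≤ n → T k = Δ := by
    intro k
    induction k with
    | zero => intro _; exact hT0
    | succ k ih => intro hk; rw [hTsucc k hk, ih (by omega)]
  have hI : ∀ k : ℕ, k ≤ n → (∫ y in Ioo a b, P y * β y ^ k * ω y) = 1 := by
    intro k hk
    rw [hIval k (by omega), hTn k hk, one_div, inv_mul_cancel₀ hΔ_ne]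
  -- main computation
  intro x
  have hfun : (fun y => P y * P (β y * x) * ω y)
      = fun y => ∑ j : Fin (n + 1),
          ((1 / Δ) * D j * x ^ (j : ℕ)) * (P y * β y ^ (j : ℕ) * ω y) := by
    funext y
    rw [hP' (β y * x), Finset.mul_sum, Finset.mul_sum, Finset.sum_mul]
    refine Finset.sum_congr rfl fun j _ => ?_
    rw [mul_pow]
    ring
  calc (∫ y in Ioo a b, P y * P (β y * x) * ω y)
      = ∫ y in Ioo a b, ∑ j : Fin (n + 1),
          ((1 / Δ) * D j * x ^ (j : ℕ)) * (P y * β y ^ (j : ℕ) * ω y) := by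
        rw [← hfun]
    _ = ∑ j : Fin (n + 1),
          ∫ y in Ioo a b, ((1 / Δ) * D j * x ^ (j : ℕ)) * (P y * β y ^ (j : ℕ) * ω y) := by
        exact integral_finset_sum _ fun j _ =>
          ((hPint j (le_trans (Nat.le_of_lt_succ j.isLt) (Nat.le_succ n))).const_mul _)
    _ = ∑ j : Fin (n + 1), ((1 / Δ) * D j * x ^ (j : ℕ)) := by
        refine Finset.sum_congr rfl fun j _ => ?_
        rw [integral_const_mul, hI j (Nat.le_of_lt_succ j.isLt), mul_one]
    _ = P x := by
        rw [hP' x, Finset.mul_sum]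
        exact Finset.sum_congr rfl fun j _ => by ring
end

section
/- Let ω be a non-negative integrable function on the interval (a,b) with ∫_a^b ω(y) dy = 1, and let L_ω[f] = ∫_a^b f(y) ω(y) dy. Let β be a measurable function on (a,b) such that y^i β(y)^j ω(y) is integrable on (a,b) for all 0 ≤ i, j ≤ n. Let P_n be a polynomial of degree at most n satisfying L_ω[P_n] = 1 and ∫_a^b P_n(y) β(y)^i (β(y) − 1) ω(y) dy = 0 for all 0 ≤ i ≤ n−1. Then ∫_a^b P_n(y) P_n(β(y)·x) ω(y) dy = P_n(x) for all real x. -/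
open MeasureTheory Set

/-- Key implication in the proof of Theorem 1: if a polynomial `Pₙ` of degree at most `n`
satisfies `L_ω[Pₙ] = 1` and the orthogonality conditions
`L_{(β-1)ω}[Pₙ βⁱ] = 0` for `0 ≤ i ≤ n-1`, then it solves the nonlinear integral equation
`∫ Pₙ(y) Pₙ(β(y)·x) ω(y) dy = Pₙ(x)`. -/
theorem integral_eq_of_beta_orth (a b : ℝ) (ω β : ℝ → ℝ) (n : ℕ)
    (hω_nonneg : ∀ y ∈ Ioo a b, 0 ≤ ω y)
    (hω_int : IntegrableOn ω (Ioo a b))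
    (hω_norm : (∫ y in Ioo a b, ω y) = 1)
    (hβ_meas : Measurable β)
    (h_int : ∀ i j : ℕ, i ≤ n → j ≤ n →
      IntegrableOn (fun y => y ^ i * β y ^ j * ω y) (Ioo a b))
    (P : Polynomial ℝ) (hdeg : P.natDegree ≤ n)
    (hnorm : (∫ y in Ioo a b, P.eval y * ω y) = 1)
    (horth : ∀ i : ℕ, i < n →
      (∫ y in Ioo a b, P.eval y * β y ^ i * (β y - 1) * ω y) = 0) :
    ∀ x : ℝ, (∫ y in Ioo a b, P.eval y * P.eval (β y * x) * ω y) = P.eval x := by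
  have hdn : P.natDegree < n + 1 := lt_of_le_of_lt hdeg (Nat.lt_succ_self n)
  have hPint : ∀ k : ℕ, k ≤ n →
      IntegrableOn (fun y => P.eval y * β y ^ k * ω y) (Ioo a b) := by
    intro k hk
    have heq : (fun y => P.eval y * β y ^ k * ω y)
        = fun y => ∑ i ∈ Finset.range (n+1), P.coeff i * (y ^ i * β y ^ k * ω y) := by
      funext y
      rw [Polynomial.eval_eq_sum_range' hdn]
      rw [Finset.sum_mul, Finset.sum_mul]
      refine Finset.sum_congr rfl fun i _ => by ring
    rw [heq]
    exact integrable_finset_sum _ fun i hi =>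
      ((h_int i k (Nat.lt_succ_iff.mp (Finset.mem_range.mp hi)) hk).const_mul _)
  have hJ : ∀ k : ℕ, k ≤ n → (∫ y in Ioo a b, P.eval y * β y ^ k * ω y) = 1 := by
    intro k
    induction k with
    | zero => intro _; simpa using hnorm
    | succ k ih =>
      intro hk
      have hk' : k < n := hk
      have h0 := horth k hk'
      have h1 : (fun y => P.eval y * β y ^ k * (β y - 1) * ω y)
          = fun y => P.eval y * β y ^ (k+1) * ω y - P.eval y * β y ^ k * ω y := by
        funext y; ring
      rw [h1, integral_sub (hPint (k+1) hk) (hPint k (le_of_lt hk'))] at h0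
      have h2 := ih (le_of_lt hk')
      linarith
  intro x
  have hexp : ∀ y : ℝ, P.eval y * P.eval (β y * x) * ω y
      = ∑ k ∈ Finset.range (n+1), P.coeff k * x ^ k * (P.eval y * β y ^ k * ω y) := by
    intro y
    rw [Polynomial.eval_eq_sum_range' hdn (β y * x), Finset.mul_sum, Finset.sum_mul]
    refine Finset.sum_congr rfl fun k _ => by ring
  calc ∫ y in Ioo a b, P.eval y * P.eval (β y * x) * ω y
      = ∫ y in Ioo a b, ∑ k ∈ Finset.range (n+1),
          P.coeff k * x ^ k * (P.eval y * β y ^ k * ω y) := by simp_rw [hexp]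
    _ = ∑ k ∈ Finset.range (n+1),
          ∫ y in Ioo a b, P.coeff k * x ^ k * (P.eval y * β y ^ k * ω y) :=
        integral_finset_sum _ fun k hk =>
          ((hPint k (Nat.lt_succ_iff.mp (Finset.mem_range.mp hk))).const_mul _)
    _ = ∑ k ∈ Finset.range (n+1), P.coeff k * x ^ k := by
        refine Finset.sum_congr rfl fun k hk => ?_
        rw [MeasureTheory.integral_const_mul, hJ k (Nat.lt_succ_iff.mp (Finset.mem_range.mp hk)), mul_one]
    _ = P.eval x := (Polynomial.eval_eq_sum_range' hdn x).symm
end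

section
/- Let ω be a non-negative integrable function on the interval (a,b) with ∫_a^b ω(y) dy = 1, and let L_ω[f] = ∫_a^b f(y) ω(y) dy. Let α be a measurable function on (a,b) with α(y) ≠ 0 on (a,b), such that y^i α(y)^j ω(y) is integrable on (a,b) for all 0 ≤ i, j ≤ n+1. Suppose the (n+1)×(n+1) determinant Δ_n, whose first row is (1, L_ω[y], …, L_ω[y^n]) and whose (i+1)-st row for 1 ≤ i ≤ n is (L_{αω}[α^{i−1}], L_{αω}[y α^{i−1}], …, L_{αω}[y^n α^{i−1}]), is nonzero, where L_{αω}[f] = ∫_a^b f(y) α(y) ω(y) dy. Define the polynomial P_n(x) = (1/Δ_n)·det of the matrix obtained by replacing the first row by (1, x, …, x^n). Then ∫_a^b P_n(y) P_n(α(y) + x) ω(y) dy = P_n(x) for all real x. -/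
open MeasureTheory Set Polynomial

/-!
Expanding the bordered determinant along its first row shows that `Pₙ` is a polynomial of degree
at most `n`, and, after integration, that `∫ Pₙ αᵏ ω` is `Δₙ⁻¹` times the determinant whose first
row is `(L_ω[yʲ αᵏ])ⱼ`. For `k = 0` this is `Δₙ` itself; for `1 ≤ k ≤ n` it repeats row `k`, so it
vanishes. Hence `L_ω[Pₙ αᵏ] = δₖ₀` for `k ≤ n`. Expanding `Pₙ(α(y) + x)` in powers of `α(y)`
(Taylor at `x`), only the constant term `Pₙ(x)` survives the integration against `Pₙ ω`.
-/

namespace Matrix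

variable {n α : Type*} [Fintype n] [DecidableEq n] [CommRing α]

theorem det_updateRow_eq_vecMul_adjugate (M : Matrix n n α) (i : n) (v : n → α) :
    (M.updateRow i v).det = (v ᵥ* M.adjugate) i := by
  rw [← det_transpose, ← updateCol_transpose, ← cramer_apply, cramer_eq_adjugate_mulVec,
    ← adjugate_transpose, mulVec_transpose]

theorem det_updateRow_mul_right (M : Matrix n n α) (i : n) (v : n → α) (s : α) :
    (M.updateRow i v).det * s = (M.updateRow i fun j => v j * s).det := by
  rw [mul_comm, ← det_updateRow_smul]
  simp_rw [Pi.smul_def, smul_eq_mul, mul_comm s]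

theorem exists_natDegree_le_det_updateRow_pow {m : ℕ} (M : Matrix (Fin (m + 1)) (Fin (m + 1)) α)
    (i : Fin (m + 1)) :
    ∃ p : α[X], p.natDegree ≤ m ∧ ∀ t, (M.updateRow i fun j => t ^ (j : ℕ)).det = p.eval t := by
  refine ⟨∑ j : Fin (m + 1), C (M.adjugate j i) * X ^ (j : ℕ),
    natDegree_sum_le_of_forall_le _ _ fun j _ => (natDegree_C_mul_X_pow_le _ _).trans j.is_le,
    fun t => ?_⟩
  simp only [det_updateRow_eq_vecMul_adjugate, vecMul, dotProduct, eval_finsetSum, eval_mul,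
    eval_C, eval_pow, eval_X, mul_comm]

theorem of_ite_val_eq_zero_eq_updateRow {m : ℕ} {β : Type*} (v : Fin (m + 1) → β)
    (R : Fin (m + 1) → Fin (m + 1) → β) :
    (of fun i j : Fin (m + 1) => if (i : ℕ) = 0 then v j else R i j) = (of R).updateRow 0 v := by
  ext i j
  rcases Fin.eq_zero_or_eq_succ i with rfl | ⟨i, rfl⟩ <;> simp [updateRow_apply]

end Matrix

section RowIntegral

variable {Ω ι : Type*} [MeasurableSpace Ω] {μ : Measure Ω} [Fintype ι] [DecidableEq ι]

theorem integrable_det_updateRow (M : Matrix ι ι ℝ) (i : ι) {f : ι → Ω → ℝ}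
    (hf : ∀ j, Integrable (f j) μ) :
    Integrable (fun y => (M.updateRow i fun j => f j y).det) μ := by
  simp_rw [Matrix.det_updateRow_eq_vecMul_adjugate, Matrix.vecMul, dotProduct]
  exact integrable_finsetSum _ fun j _ => (hf j).mul_const _

theorem integral_det_updateRow (M : Matrix ι ι ℝ) (i : ι) {f : ι → Ω → ℝ}
    (hf : ∀ j, Integrable (f j) μ) :
    ∫ y, (M.updateRow i fun j => f j y).det ∂μ = (M.updateRow i fun j => ∫ y, f j y ∂μ).det := by
  simp_rw [Matrix.det_updateRow_eq_vecMul_adjugate, Matrix.vecMul, dotProduct]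
  rw [integral_finsetSum _ fun j _ => (hf j).mul_const _]
  simp_rw [integral_mul_const]

end RowIntegral

theorem integral_mul_eval_add_eq_eval {Ω : Type*} [MeasurableSpace Ω] {μ : Measure Ω}
    {ω α P : Ω → ℝ} {n : ℕ}
    (hint : ∀ k ≤ n, Integrable (fun y => P y * (α y ^ k * ω y)) μ)
    (hmom : ∀ k ≤ n, ∫ y, P y * (α y ^ k * ω y) ∂μ = if k = 0 then 1 else 0)
    {q : ℝ[X]} (hq : q.natDegree ≤ n) (x : ℝ) :
    ∫ y, P y * q.eval (α y + x) * ω y ∂μ = q.eval x := by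
  have hle : ∀ k ∈ Finset.range (n + 1), k ≤ n := fun k hk =>
    Nat.lt_succ_iff.mp (Finset.mem_range.mp hk)
  have hexpand : ∀ y, P y * q.eval (α y + x) * ω y =
      ∑ k ∈ Finset.range (n + 1), (taylor x q).coeff k * (P y * (α y ^ k * ω y)) := by
    intro y
    rw [← taylor_eval, eval_eq_sum_range' (n := n + 1) (by rw [natDegree_taylor]; omega),
      Finset.mul_sum, Finset.sum_mul]
    exact Finset.sum_congr rfl fun k _ => by ring
  calc ∫ y, P y * q.eval (α y + x) * ω y ∂μ
      = ∑ k ∈ Finset.range (n + 1), (taylor x q).coeff k * ∫ y, P y * (α y ^ k * ω y) ∂μ := by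
        simp_rw [hexpand]
        rw [integral_finsetSum _ fun k hk => (hint k (hle k hk)).const_mul _]
        simp_rw [integral_const_mul]
    _ = (taylor x q).coeff 0 := by
        rw [Finset.sum_congr rfl fun k hk => by rw [hmom k (hle k hk)]]
        simp
    _ = q.eval x := taylor_coeff_zero _ _

section BorderedDeterminant

variable {n : ℕ} {R : Fin (n + 1) → Fin (n + 1) → ℝ} {Δ : ℝ} {P : ℝ → ℝ}

theorem exists_natDegree_le_eval_eq_of_eq_det
    (hP : ∀ x : ℝ, P x = (1 / Δ) *
      (Matrix.of fun i j : Fin (n + 1) => if (i : ℕ) = 0 then x ^ (j : ℕ) else R i j).det) :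
    ∃ p : ℝ[X], p.natDegree ≤ n ∧ ∀ t, P t = p.eval t := by
  obtain ⟨p, hp_deg, hp⟩ := (Matrix.of R).exists_natDegree_le_det_updateRow_pow 0
  refine ⟨C (1 / Δ) * p, natDegree_C_mul_le _ _ |>.trans hp_deg, fun t => ?_⟩
  rw [hP, Matrix.of_ite_val_eq_zero_eq_updateRow, hp, eval_mul, eval_C]

theorem mul_eq_inv_mul_det_updateRow_of_eq_det
    (hP : ∀ x : ℝ, P x = (1 / Δ) *
      (Matrix.of fun i j : Fin (n + 1) => if (i : ℕ) = 0 then x ^ (j : ℕ) else R i j).det)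
    (y s : ℝ) :
    P y * s = Δ⁻¹ * ((Matrix.of R).updateRow 0 fun j => y ^ (j : ℕ) * s).det := by
  rw [hP, Matrix.of_ite_val_eq_zero_eq_updateRow, one_div, mul_assoc,
    Matrix.det_updateRow_mul_right]

variable {μ : Measure ℝ} {g : ℝ → ℝ}

theorem integrable_mul_of_eq_det
    (hP : ∀ x : ℝ, P x = (1 / Δ) *
      (Matrix.of fun i j : Fin (n + 1) => if (i : ℕ) = 0 then x ^ (j : ℕ) else R i j).det)
    (hg : ∀ j : Fin (n + 1), Integrable (fun y => y ^ (j : ℕ) * g y) μ) :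
    Integrable (fun y => P y * g y) μ := by
  simp_rw [mul_eq_inv_mul_det_updateRow_of_eq_det hP]
  exact (integrable_det_updateRow _ 0 hg).const_mul _

theorem integral_mul_of_eq_det
    (hP : ∀ x : ℝ, P x = (1 / Δ) *
      (Matrix.of fun i j : Fin (n + 1) => if (i : ℕ) = 0 then x ^ (j : ℕ) else R i j).det)
    (hg : ∀ j : Fin (n + 1), Integrable (fun y => y ^ (j : ℕ) * g y) μ) :
    ∫ y, P y * g y ∂μ =
      Δ⁻¹ * ((Matrix.of R).updateRow 0 fun j => ∫ y, y ^ (j : ℕ) * g y ∂μ).det := by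
  simp_rw [mul_eq_inv_mul_det_updateRow_of_eq_det hP]
  rw [integral_const_mul, integral_det_updateRow _ 0 hg]

end BorderedDeterminant

theorem inv_mul_det_updateRow_moments_eq_ite {μ : Measure ℝ} {ω α : ℝ → ℝ} {n k : ℕ} {Δ : ℝ}
    (hω_norm : ∫ y, ω y ∂μ = 1)
    (hΔ : Δ = (Matrix.of fun i j : Fin (n + 1) =>
      if (i : ℕ) = 0 then
        (if (j : ℕ) = 0 then (1 : ℝ) else ∫ y, y ^ (j : ℕ) * ω y ∂μ)
      else
        ∫ y, y ^ (j : ℕ) * α y ^ ((i : ℕ) - 1) * α y * ω y ∂μ).det)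
    (hΔ_ne : Δ ≠ 0) (hk : k ≤ n) :
    Δ⁻¹ * ((Matrix.of fun i j : Fin (n + 1) =>
        ∫ y, y ^ (j : ℕ) * α y ^ ((i : ℕ) - 1) * α y * ω y ∂μ).updateRow 0
      fun j => ∫ y, y ^ (j : ℕ) * (α y ^ k * ω y) ∂μ).det = if k = 0 then 1 else 0 := by
  rw [Matrix.of_ite_val_eq_zero_eq_updateRow] at hΔ
  rcases Nat.eq_zero_or_pos k with rfl | hk0
  · have hfirst : (fun j : Fin (n + 1) => ∫ y, y ^ (j : ℕ) * (α y ^ 0 * ω y) ∂μ) =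
        fun j : Fin (n + 1) => if (j : ℕ) = 0 then 1 else ∫ y, y ^ (j : ℕ) * ω y ∂μ := by
      funext j
      split_ifs with hj <;> simp [hj, hω_norm]
    rw [hfirst, ← hΔ, if_pos rfl, inv_mul_cancel₀ hΔ_ne]
  · set M : Matrix (Fin (n + 1)) (Fin (n + 1)) ℝ := Matrix.of fun i j =>
      ∫ y, y ^ (j : ℕ) * α y ^ ((i : ℕ) - 1) * α y * ω y ∂μ
    have hrow : (fun j : Fin (n + 1) => ∫ y, y ^ (j : ℕ) * (α y ^ k * ω y) ∂μ) =
        M ⟨k, by omega⟩ := by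
      funext j
      simp only [M, Matrix.of_apply, mul_assoc, ← pow_succ, Nat.sub_add_cancel hk0]
    rw [hrow, Matrix.det_updateRow_eq_zero (Fin.ne_of_val_ne hk0.ne'), mul_zero, if_neg hk0.ne']

theorem polynomial_solution_alpha_det_general (a b : ℝ) (ω α : ℝ → ℝ) (n : ℕ)
    (hω_norm : (∫ y in Ioo a b, ω y) = 1)
    (h_int : ∀ i j : ℕ, i ≤ n + 1 → j ≤ n + 1 →
      IntegrableOn (fun y => y ^ i * α y ^ j * ω y) (Ioo a b))
    (Δ : ℝ)
    (hΔ : Δ = (Matrix.of fun i j : Fin (n + 1) =>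
      if (i : ℕ) = 0 then
        (if (j : ℕ) = 0 then (1 : ℝ) else ∫ y in Ioo a b, y ^ (j : ℕ) * ω y)
      else
        ∫ y in Ioo a b, y ^ (j : ℕ) * α y ^ ((i : ℕ) - 1) * α y * ω y).det)
    (hΔ_ne : Δ ≠ 0)
    (P : ℝ → ℝ)
    (hP : ∀ x : ℝ, P x = (1 / Δ) * (Matrix.of fun i j : Fin (n + 1) =>
      if (i : ℕ) = 0 then x ^ (j : ℕ)
      else
        ∫ y in Ioo a b, y ^ (j : ℕ) * α y ^ ((i : ℕ) - 1) * α y * ω y).det) :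
    ∀ x : ℝ, (∫ y in Ioo a b, P y * P (α y + x) * ω y) = P x := by
  obtain ⟨p, hp_deg, hp⟩ := exists_natDegree_le_eval_eq_of_eq_det hP
  have hg : ∀ k ≤ n, ∀ j : Fin (n + 1),
      IntegrableOn (fun y => y ^ (j : ℕ) * (α y ^ k * ω y)) (Ioo a b) := fun k hk j => by
    simpa only [mul_assoc] using h_int j k (by omega) (by omega)
  intro x
  simp_rw [hp (α _ + x)]
  refine (integral_mul_eval_add_eq_eval (fun k hk => ?_) (fun k hk => ?_) hp_deg x).trans
    (hp x).symm
  · exact integrable_mul_of_eq_det hP (hg k hk)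
  · rw [integral_mul_of_eq_det hP (hg k hk)]
    exact inv_mul_det_updateRow_moments_eq_ite hω_norm hΔ hΔ_ne hk

/-- **Theorem 2** of Dominici, "Polynomial solutions of nonlinear integral equations".
If `α ≠ 0` on `(a,b)` and the determinant `Δₙ` (first row the moments of `ω`, subsequent
rows the moments of `αω` against powers of `α`) is nonzero, then the bordered-determinant
polynomial `Pₙ` satisfies `∫ Pₙ(y) Pₙ(α(y)+x) ω(y) dy = Pₙ(x)`. -/
theorem polynomial_solution_alpha_det (a b : ℝ) (ω α : ℝ → ℝ) (n : ℕ)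
    (hω_nonneg : ∀ y ∈ Ioo a b, 0 ≤ ω y)
    (hω_int : IntegrableOn ω (Ioo a b))
    (hω_norm : (∫ y in Ioo a b, ω y) = 1)
    (hα_meas : Measurable α)
    (hα_ne_zero : ∀ y ∈ Ioo a b, α y ≠ 0)
    (h_int : ∀ i j : ℕ, i ≤ n + 1 → j ≤ n + 1 →
      IntegrableOn (fun y => y ^ i * α y ^ j * ω y) (Ioo a b))
    (Δ : ℝ)
    (hΔ : Δ = (Matrix.of fun i j : Fin (n + 1) =>
      if (i : ℕ) = 0 then
        (if (j : ℕ) = 0 then (1 : ℝ) else ∫ y in Ioo a b, y ^ (j : ℕ) * ω y)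
      else
        ∫ y in Ioo a b, y ^ (j : ℕ) * α y ^ ((i : ℕ) - 1) * α y * ω y).det)
    (hΔ_ne : Δ ≠ 0)
    (P : ℝ → ℝ)
    (hP : ∀ x : ℝ, P x = (1 / Δ) * (Matrix.of fun i j : Fin (n + 1) =>
      if (i : ℕ) = 0 then x ^ (j : ℕ)
      else
        ∫ y in Ioo a b, y ^ (j : ℕ) * α y ^ ((i : ℕ) - 1) * α y * ω y).det) :
    ∀ x : ℝ, (∫ y in Ioo a b, P y * P (α y + x) * ω y) = P x :=
  polynomial_solution_alpha_det_general a b ω α n hω_norm h_int Δ hΔ hΔ_ne P hP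
end

section
/- Let ω be a non-negative integrable function on the interval (a,b) with ∫_a^b ω(y) dy = 1, and let L_ω[f] = ∫_a^b f(y) ω(y) dy. Let α be a measurable function on (a,b) such that y^i α(y)^j ω(y) is integrable on (a,b) for all 0 ≤ i, j ≤ n. Let P_n be a polynomial of degree at most n satisfying L_ω[P_n] = 1 and ∫_a^b P_n(y) α(y)^{i+1} ω(y) dy = 0 for all 0 ≤ i ≤ n−1. Then ∫_a^b P_n(y) P_n(α(y) + x) ω(y) dy = P_n(x) for all real x. -/
open MeasureTheory Set

/-- Key implication in the proof of Theorem 2: if a polynomial `Pₙ` of degree at most `n`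
satisfies `L_ω[Pₙ] = 1` and `L_{αω}[Pₙ αⁱ] = 0` for `0 ≤ i ≤ n-1`, then it solves the
nonlinear integral equation `∫ Pₙ(y) Pₙ(α(y)+x) ω(y) dy = Pₙ(x)`. -/
theorem integral_eq_of_alpha_orth (a b : ℝ) (ω α : ℝ → ℝ) (n : ℕ)
    (hω_nonneg : ∀ y ∈ Ioo a b, 0 ≤ ω y)
    (hω_int : IntegrableOn ω (Ioo a b))
    (hω_norm : (∫ y in Ioo a b, ω y) = 1)
    (hα_meas : Measurable α)
    (h_int : ∀ i j : ℕ, i ≤ n → j ≤ n →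
      IntegrableOn (fun y => y ^ i * α y ^ j * ω y) (Ioo a b))
    (P : Polynomial ℝ) (hdeg : P.natDegree ≤ n)
    (hnorm : (∫ y in Ioo a b, P.eval y * ω y) = 1)
    (horth : ∀ i : ℕ, i < n →
      (∫ y in Ioo a b, P.eval y * α y ^ (i + 1) * ω y) = 0) :
    ∀ x : ℝ, (∫ y in Ioo a b, P.eval y * P.eval (α y + x) * ω y) = P.eval x := by
  intro x
  -- integrability of P(y) * α(y)^j * ω(y)
  have hPint : ∀ j : ℕ, j ≤ n →
      IntegrableOn (fun y => P.eval y * α y ^ j * ω y) (Ioo a b) := by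
    intro j hj
    have heq : (fun y => P.eval y * α y ^ j * ω y) =
        fun y => ∑ i ∈ Finset.range (n + 1), P.coeff i * (y ^ i * α y ^ j * ω y) := by
      funext y
      rw [Polynomial.eval_eq_sum_range' (Nat.lt_succ_of_le hdeg), Finset.sum_mul,
        Finset.sum_mul]
      exact Finset.sum_congr rfl fun i _ => by ring
    rw [heq]
    exact integrable_finset_sum _ fun i hi =>
      ((h_int i j (Nat.lt_succ_iff.mp (Finset.mem_range.mp hi)) hj).const_mul _)
  set Q : Polynomial ℝ := P.comp (Polynomial.X + Polynomial.C x) with hQ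
  have hQdeg : Q.natDegree ≤ n := by
    rw [hQ, Polynomial.natDegree_comp, Polynomial.natDegree_X_add_C, mul_one]
    exact hdeg
  have heval : ∀ y : ℝ, P.eval (α y + x) = ∑ j ∈ Finset.range (n + 1),
      Q.coeff j * α y ^ j := by
    intro y
    have : P.eval (α y + x) = Q.eval (α y) := by
      simp [hQ]
    rw [this, Polynomial.eval_eq_sum_range' (Nat.lt_succ_of_le hQdeg)]
  have hmain : (∫ y in Ioo a b, P.eval y * P.eval (α y + x) * ω y) =
      ∑ j ∈ Finset.range (n + 1), Q.coeff j * ∫ y in Ioo a b, P.eval y * α y ^ j * ω y := by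
    have heq : (fun y => P.eval y * P.eval (α y + x) * ω y) =
        fun y => ∑ j ∈ Finset.range (n + 1), Q.coeff j * (P.eval y * α y ^ j * ω y) := by
      funext y
      rw [heval y, Finset.mul_sum, Finset.sum_mul]
      exact Finset.sum_congr rfl fun j _ => by ring
    rw [heq, integral_finset_sum _ fun j hj =>
      ((hPint j (Nat.lt_succ_iff.mp (Finset.mem_range.mp hj))).const_mul _)]
    exact Finset.sum_congr rfl fun j _ => by rw [integral_const_mul]
  rw [hmain, Finset.sum_range_succ']
  have h0 : (∫ y in Ioo a b, P.eval y * α y ^ 0 * ω y) = 1 := by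
    simpa using hnorm
  have hrest : ∀ i ∈ Finset.range n,
      Q.coeff (i + 1) * (∫ y in Ioo a b, P.eval y * α y ^ (i + 1) * ω y) = 0 := by
    intro i hi
    rw [horth i (Finset.mem_range.mp hi), mul_zero]
  rw [Finset.sum_eq_zero hrest, h0, mul_one, zero_add,
    Polynomial.coeff_zero_eq_eval_zero]
  simp [hQ]
end

section
/- Let ω be a non-negative integrable function on the interval (a,b) with ∫_a^b ω(y) dy = 1 and with y^k ω(y) integrable on (a,b) for every k ≥ 0, and let L_ω[f] = ∫_a^b f(y) ω(y) dy. Let ζ be a real number with ζ ∉ (a,b), and let (P_n)_{n≥0} be a sequence of real polynomials with deg P_n = n that is orthogonal with respect to the functional L_{(y−ζ)ω}[f] = ∫_a^b f(y)(y−ζ)ω(y) dy (i.e., L_{(y−ζ)ω}[P_n P_m] = 0 for n ≠ m and L_{(y−ζ)ω}[P_n^2] ≠ 0 for all n), and which satisfies the normalization L_ω[P_n] = 1 for all n. Then for all real numbers τ, σ and all n, ∫_a^b P_n(y) P_n((y−ζ)(τ+σx) + x) ω(y) dy = P_n(x) for all real x. -/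
open MeasureTheory Set

/-- **Theorem 3 (Th1)** of Dominici, "Polynomial solutions of nonlinear integral equations".
Let `ζ ∉ (a,b)` and let `(Pₙ)` be an orthogonal polynomial sequence for the functional
`L_{(y-ζ)ω}`, normalized by `L_ω[Pₙ] = 1`. Then
`∫ Pₙ(y) Pₙ((y-ζ)(τ+σx)+x) ω(y) dy = Pₙ(x)` for all real `τ`, `σ`, `x`. -/
theorem kernel_type_OPS_solves_integral_eq (a b : ℝ) (ω : ℝ → ℝ)
    (hω_nonneg : ∀ y ∈ Ioo a b, 0 ≤ ω y)
    (hω_int : IntegrableOn ω (Ioo a b))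
    (hω_norm : (∫ y in Ioo a b, ω y) = 1)
    (h_moments : ∀ k : ℕ, IntegrableOn (fun y => y ^ k * ω y) (Ioo a b))
    (ζ : ℝ) (hζ : ζ ∉ Ioo a b)
    (P : ℕ → Polynomial ℝ)
    (hdeg : ∀ n, (P n).natDegree = n)
    (horth : ∀ n m, n ≠ m →
      (∫ y in Ioo a b, (P n).eval y * (P m).eval y * (y - ζ) * ω y) = 0)
    (hne : ∀ n, (∫ y in Ioo a b, ((P n).eval y) ^ 2 * (y - ζ) * ω y) ≠ 0)
    (hnorm : ∀ n, (∫ y in Ioo a b, (P n).eval y * ω y) = 1) :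
    ∀ (τ σ : ℝ) (n : ℕ) (x : ℝ),
      (∫ y in Ioo a b, (P n).eval y * (P n).eval ((y - ζ) * (τ + σ * x) + x) * ω y)
        = (P n).eval x := by
  -- any polynomial times ω is integrable
  have intp : ∀ q : Polynomial ℝ, IntegrableOn (fun y => q.eval y * ω y) (Ioo a b) := by
    intro q
    have e : (fun y => q.eval y * ω y)
        = fun y => ∑ k ∈ Finset.range (q.natDegree + 1), q.coeff k * (y ^ k * ω y) := by
      funext y
      rw [Polynomial.eval_eq_sum_range, Finset.sum_mul]
      exact Finset.sum_congr rfl (fun k _ => by ring)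
    rw [e]
    exact integrable_finset_sum _ (fun k _ => (h_moments k).const_mul _)
  have intp2 : ∀ q r : Polynomial ℝ,
      IntegrableOn (fun y => q.eval y * r.eval y * (y - ζ) * ω y) (Ioo a b) := by
    intro q r
    have e : (fun y => q.eval y * r.eval y * (y - ζ) * ω y)
        = fun y => (q * r * (Polynomial.X - Polynomial.C ζ)).eval y * ω y := by
      funext y; simp
    rw [e]; exact intp _
  -- P d ≠ 0
  have hP0 : ∀ d, P d ≠ 0 := by
    intro d h
    exact hne d (by simp [h])
  -- key orthogonality: P m ⟂ any polynomial of degree < d ≤ m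
  have key : ∀ d : ℕ, ∀ m : ℕ, d ≤ m → ∀ Q : Polynomial ℝ, Q.degree < (d : WithBot ℕ) →
      (∫ y in Ioo a b, (P m).eval y * Q.eval y * (y - ζ) * ω y) = 0 := by
    intro d
    induction d with
    | zero =>
      intro m _ Q hQ
      have : Q = 0 := by
        rw [← Polynomial.degree_eq_bot]
        exact Nat.WithBot.lt_zero_iff.mp (by exact_mod_cast hQ)
      simp [this]
    | succ d ih =>
      intro m hdm Q hQ
      rcases eq_or_ne Q 0 with h0 | h0
      · simp [h0]
      have hlc : (P d).leadingCoeff ≠ 0 := Polynomial.leadingCoeff_ne_zero.mpr (hP0 d)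
      have hQnd : Q.natDegree ≤ d := by
        have := (Polynomial.natDegree_lt_iff_degree_lt h0).mpr (by exact_mod_cast hQ)
        omega
      set c := Q.coeff d / (P d).leadingCoeff with hc
      set R := Q - Polynomial.C c * P d with hRdef
      have hRd : R.degree < (d : WithBot ℕ) := by
        rw [Polynomial.degree_lt_iff_coeff_zero]
        intro k hk
        have hk' : d ≤ k := by exact_mod_cast hk
        simp only [hRdef, Polynomial.coeff_sub, Polynomial.coeff_C_mul]
        rcases eq_or_lt_of_le hk' with h | h
        · rw [← h]
          have : (P d).coeff d = (P d).leadingCoeff := by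
            rw [Polynomial.leadingCoeff, hdeg]
          rw [this, hc, div_mul_cancel₀ _ hlc, sub_self]
        · have h1 : Q.coeff k = 0 :=
            Polynomial.coeff_eq_zero_of_natDegree_lt (lt_of_le_of_lt hQnd h)
          have h2 : (P d).coeff k = 0 :=
            Polynomial.coeff_eq_zero_of_natDegree_lt (by rw [hdeg]; exact h)
          simp [h1, h2]
      have split : ∀ y, (P m).eval y * Q.eval y * (y - ζ) * ω y
          = c * ((P m).eval y * (P d).eval y * (y - ζ) * ω y)
            + (P m).eval y * R.eval y * (y - ζ) * ω y := by
        intro y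
        simp only [hRdef, Polynomial.eval_sub, Polynomial.eval_mul, Polynomial.eval_C]
        ring
      calc (∫ y in Ioo a b, (P m).eval y * Q.eval y * (y - ζ) * ω y)
          = ∫ y in Ioo a b, (c * ((P m).eval y * (P d).eval y * (y - ζ) * ω y)
            + (P m).eval y * R.eval y * (y - ζ) * ω y) := by simp only [split]
        _ = c * (∫ y in Ioo a b, (P m).eval y * (P d).eval y * (y - ζ) * ω y)
            + ∫ y in Ioo a b, (P m).eval y * R.eval y * (y - ζ) * ω y := by
            rw [integral_add ((intp2 _ _).const_mul c) (intp2 _ _), integral_const_mul c]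
        _ = c * 0 + 0 := by
            rw [horth m d (by omega), ih m (by omega) R hRd]
        _ = 0 := by ring
  intro τ σ n x
  set t := τ + σ * x with ht
  set A := (P n).comp ((Polynomial.X - Polynomial.C ζ) * Polynomial.C t + Polynomial.C x)
      - Polynomial.C ((P n).eval x) with hA
  obtain ⟨Q, hQ⟩ : (Polynomial.X - Polynomial.C ζ) ∣ A := by
    apply Polynomial.dvd_iff_isRoot.mpr
    simp [hA, Polynomial.IsRoot, Polynomial.eval_comp]
  have hdQ : Q.degree < (n : WithBot ℕ) := by
    rcases eq_or_ne Q 0 with h | h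
    · rw [h, Polynomial.degree_zero]; exact WithBot.bot_lt_coe n
    · have hA0 : A ≠ 0 := by
        rw [hQ]; exact mul_ne_zero (Polynomial.X_sub_C_ne_zero ζ) h
      have h1 : A.natDegree ≤ n := by
        have harg : ((Polynomial.X - Polynomial.C ζ) * Polynomial.C t
            + Polynomial.C x).natDegree ≤ 1 := by
          apply le_trans (Polynomial.natDegree_add_le _ _)
          simp only [Polynomial.natDegree_C, max_le_iff]
          constructor
          · apply le_trans (Polynomial.natDegree_mul_le)
            simp [Polynomial.natDegree_X_sub_C]
          · omega
        have hcomp : ((P n).comp ((Polynomial.X - Polynomial.C ζ) * Polynomial.C t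
            + Polynomial.C x)).natDegree ≤ n := by
          rw [Polynomial.natDegree_comp, hdeg]
          calc n * _ ≤ n * 1 := Nat.mul_le_mul_left n harg
            _ = n := mul_one n
        calc A.natDegree ≤ max _ ((Polynomial.C ((P n).eval x)).natDegree) :=
            Polynomial.natDegree_sub_le _ _
          _ ≤ n := by simp [Polynomial.natDegree_C]; exact hcomp
      have h2 : A.natDegree = 1 + Q.natDegree := by
        rw [hQ, Polynomial.natDegree_mul (Polynomial.X_sub_C_ne_zero ζ) h,
          Polynomial.natDegree_X_sub_C]
      have h3 : Q.natDegree < n := by omega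
      rw [Polynomial.degree_eq_natDegree h]
      exact_mod_cast h3
  have hker := key n n le_rfl Q hdQ
  have split : ∀ y, (P n).eval y * (P n).eval ((y - ζ) * t + x) * ω y
      = (P n).eval y * Q.eval y * (y - ζ) * ω y
        + (P n).eval x * ((P n).eval y * ω y) := by
    intro y
    have hAy : (y - ζ) * Q.eval y = (P n).eval ((y - ζ) * t + x) - (P n).eval x := by
      have h := congrArg (Polynomial.eval y) hQ
      simp only [hA, Polynomial.eval_sub, Polynomial.eval_mul, Polynomial.eval_add,
        Polynomial.eval_comp, Polynomial.eval_C, Polynomial.eval_X] at h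
      linarith [h]
    have : (P n).eval ((y - ζ) * t + x) = (y - ζ) * Q.eval y + (P n).eval x := by
      linarith [hAy]
    rw [this]; ring
  calc (∫ y in Ioo a b, (P n).eval y * (P n).eval ((y - ζ) * t + x) * ω y)
      = ∫ y in Ioo a b, ((P n).eval y * Q.eval y * (y - ζ) * ω y
        + (P n).eval x * ((P n).eval y * ω y)) := by simp only [split]
    _ = (∫ y in Ioo a b, (P n).eval y * Q.eval y * (y - ζ) * ω y)
        + ∫ y in Ioo a b, (P n).eval x * ((P n).eval y * ω y) := by
        rw [integral_add (intp2 _ _) ((intp (P n)).const_mul _)]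
    _ = 0 + (P n).eval x * 1 := by rw [hker, integral_const_mul, hnorm n]
    _ = (P n).eval x := by ring
end

section
/- Let ω be a non-negative integrable function on the interval (a,b) with ∫_a^b ω(y) dy = 1 and with y^k ω(y) integrable on (a,b) for every k ≥ 0, and let L_ω[f] = ∫_a^b f(y) ω(y) dy. Let (𝔭_k)_{k≥0} be a sequence of real polynomials with deg 𝔭_k = k orthogonal with respect to L_ω (L_ω[𝔭_j 𝔭_k] = 0 for j ≠ k, L_ω[𝔭_k^2] ≠ 0), let ζ ∉ (a,b) satisfy 𝔭_k(ζ) ≠ 0 for all k, and define the kernel polynomials K_n(x;ζ) = Σ_{k=0}^{n} (𝔭_k(ζ)/L_ω[𝔭_k^2]) 𝔭_k(x). Suppose (P_n)_{n≥0} is a sequence of real polynomials with deg P_n = n that is orthogonal with respect to L_{(y−ζ)ω}[f] = ∫_a^b f(y)(y−ζ)ω(y) dy and satisfies, for given real τ, σ and every n, the nonlinear integral equation ∫_a^b P_n(y) P_n((y−ζ)(τ+σx) + x) ω(y) dy = P_n(x) for all real x. Then P_n(x) = K_n(x;ζ) for all n. -/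
/-!
The kernel polynomial `Kₙ(·;ζ)` reproduces evaluation at `ζ`: `L_ω[Kₙ q] = q(ζ)` whenever
`deg q ≤ n`, as one sees by expanding `q` in the orthogonal basis `(𝔭ₖ)`. Taking `q = (y - ζ) r`
with `deg r < n` shows that `Kₙ` is orthogonal to all polynomials of lower degree for
`L_{(y-ζ)ω}`, hence `Kₙ = c Pₙ`. Taking `q(y) = Pₙ((y - ζ)(τ + σx) + x)`, of degree `≤ n` with
`q(ζ) = Pₙ(x)`, the integral equation turns the reproducing property into `c Pₙ(x) = Pₙ(x)`,
so `c = 1`.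
-/

open MeasureTheory Set Polynomial

namespace Polynomial

variable {K : Type*} [Field K] {L : K[X] →ₗ[K] K} {p P : ℕ → K[X]}

structure IsOrthogonalSeq (L : K[X] →ₗ[K] K) (p : ℕ → K[X]) : Prop where
  natDegree_eq : ∀ n, (p n).natDegree = n
  map_mul_eq_zero : ∀ m n, m ≠ n → L (p m * p n) = 0
  map_sq_ne_zero : ∀ n, L (p n ^ 2) ≠ 0

noncomputable def kernelPolynomial (L : K[X] →ₗ[K] K) (p : ℕ → K[X]) (ζ : K) (n : ℕ) :
    K[X] :=
  ∑ k ∈ Finset.range (n + 1), (eval ζ (p k) / L (p k ^ 2)) • p k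

namespace IsOrthogonalSeq

theorem ne_zero (hp : IsOrthogonalSeq L p) (n : ℕ) : p n ≠ 0 :=
  fun h => hp.map_sq_ne_zero n (by simp [h])

def toSequence (hp : IsOrthogonalSeq L p) : Sequence K where
  elems' := p
  degree_eq' n := by rw [degree_eq_natDegree (hp.ne_zero n), hp.natDegree_eq]

theorem exists_sum_smul_eq (hp : IsOrthogonalSeq L p) {n : ℕ} {q : K[X]}
    (hq : q.natDegree ≤ n) :
    ∃ c : ℕ → K, ∑ i ∈ Finset.range (n + 1), c i • p i = q := by
  have hmem : q ∈ degreeLE K n := mem_degreeLE.mpr (degree_le_of_natDegree_le hq)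
  rw [← hp.toSequence.span_degreeLE fun i _ => (leadingCoeff_ne_zero.mpr (hp.ne_zero i)).isUnit,
    show Iic n = (Finset.range (n + 1) : Set ℕ) by ext; simp] at hmem
  exact (Submodule.mem_span_image_finset_iff_exists_fun' K).mp hmem

theorem map_sum_smul_mul (hp : IsOrthogonalSeq L p) (c : ℕ → K) {n j : ℕ}
    (hj : j ∈ Finset.range (n + 1)) :
    L ((∑ i ∈ Finset.range (n + 1), c i • p i) * p j) = c j * L (p j ^ 2) := by
  simp only [Finset.sum_mul, map_sum, smul_mul_assoc, map_smul, smul_eq_mul]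
  rw [Finset.sum_eq_single_of_mem j hj fun i _ hij => by rw [hp.map_mul_eq_zero i j hij, mul_zero],
    sq]

theorem sum_smul_eq (hp : IsOrthogonalSeq L p) {n : ℕ} {q : K[X]} (hq : q.natDegree ≤ n) :
    ∑ i ∈ Finset.range (n + 1), (L (q * p i) / L (p i ^ 2)) • p i = q := by
  obtain ⟨c, rfl⟩ := hp.exists_sum_smul_eq hq
  refine Finset.sum_congr rfl fun i hi => ?_
  rw [hp.map_sum_smul_mul c hi, mul_div_cancel_right₀ _ (hp.map_sq_ne_zero i)]

theorem exists_eq_smul_of_map_mul_eq_zero (hp : IsOrthogonalSeq L p) {n : ℕ} {q : K[X]}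
    (hq : q.natDegree ≤ n) (horth : ∀ m < n, L (q * p m) = 0) : ∃ c : K, q = c • p n := by
  refine ⟨L (q * p n) / L (p n ^ 2), (hp.sum_smul_eq hq).symm.trans ?_⟩
  rw [Finset.sum_range_succ, Finset.sum_eq_zero fun m hm => ?_, zero_add]
  rw [horth m (Finset.mem_range.mp hm), zero_div, zero_smul]

theorem natDegree_kernelPolynomial_le (hp : IsOrthogonalSeq L p) (ζ : K) (n : ℕ) :
    (kernelPolynomial L p ζ n).natDegree ≤ n :=
  natDegree_sum_le_of_forall_le _ _ fun k hk => (natDegree_smul_le _ _).trans <| by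
    rw [hp.natDegree_eq]; exact Finset.mem_range_succ_iff.mp hk

theorem map_kernelPolynomial_mul (hp : IsOrthogonalSeq L p) (ζ : K) {n : ℕ} {q : K[X]}
    (hq : q.natDegree ≤ n) : L (kernelPolynomial L p ζ n * q) = q.eval ζ := by
  conv_rhs => rw [← hp.sum_smul_eq hq]
  simp only [kernelPolynomial, Finset.sum_mul, map_sum, smul_mul_assoc, map_smul, smul_eq_mul,
    eval_finsetSum, eval_smul]
  refine Finset.sum_congr rfl fun i _ => ?_
  rw [mul_comm q]
  ring

theorem exists_kernelPolynomial_eq_smul (hp : IsOrthogonalSeq L p) {ζ : K}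
    (hP : IsOrthogonalSeq (L ∘ₗ LinearMap.mulRight K (X - C ζ)) P) (n : ℕ) :
    ∃ c : K, kernelPolynomial L p ζ n = c • P n := by
  refine hP.exists_eq_smul_of_map_mul_eq_zero (hp.natDegree_kernelPolynomial_le ζ n)
    fun m hm => ?_
  have hdeg : (P m * (X - C ζ)).natDegree ≤ n :=
    natDegree_mul_le.trans (by rw [hP.natDegree_eq, natDegree_X_sub_C]; omega)
  simp only [LinearMap.coe_comp, Function.comp_apply, LinearMap.mulRight_apply]
  rw [mul_assoc, hp.map_kernelPolynomial_mul ζ hdeg]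
  simp

theorem kernelPolynomial_eq_of_integral_equation [Infinite K] (hp : IsOrthogonalSeq L p) {ζ : K}
    (hP : IsOrthogonalSeq (L ∘ₗ LinearMap.mulRight K (X - C ζ)) P) (n : ℕ) (φ : K → K[X])
    (hφ_deg : ∀ x, (φ x).natDegree ≤ 1) (hφ_eval : ∀ x, (φ x).eval ζ = x)
    (heq : ∀ x, L (P n * (P n).comp (φ x)) = (P n).eval x) :
    kernelPolynomial L p ζ n = P n := by
  obtain ⟨c, hc⟩ := hp.exists_kernelPolynomial_eq_smul hP n
  have hfix : c • P n = P n := Polynomial.funext fun x => by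
    have hdeg : ((P n).comp (φ x)).natDegree ≤ n := natDegree_comp_le.trans <| by
      rw [hP.natDegree_eq]; simpa using Nat.mul_le_mul_left n (hφ_deg x)
    calc (c • P n).eval x = L (kernelPolynomial L p ζ n * (P n).comp (φ x)) := by
          rw [hc, smul_mul_assoc, map_smul, heq, eval_smul]
      _ = (P n).eval x := by rw [hp.map_kernelPolynomial_mul ζ hdeg, eval_comp, hφ_eval]
  rw [hc, smul_left_injective K (hP.ne_zero n) (hfix.trans (one_smul K _).symm), one_smul]

end IsOrthogonalSeq

end Polynomial

theorem Polynomial.integrable_eval_mul {μ : Measure ℝ} {ω : ℝ → ℝ}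
    (h : ∀ k : ℕ, Integrable (fun y => y ^ k * ω y) μ)
    (q : ℝ[X]) : Integrable (fun y => q.eval y * ω y) μ := by
  simp_rw [eval_eq_sum_range, Finset.sum_mul, mul_assoc]
  exact integrable_finsetSum _ fun i _ => (h i).const_mul _

noncomputable def weightedIntegral (μ : Measure ℝ) (ω : ℝ → ℝ)
    (h : ∀ k : ℕ, Integrable (fun y => y ^ k * ω y) μ) : ℝ[X] →ₗ[ℝ] ℝ where
  toFun q := ∫ y, q.eval y * ω y ∂μ
  map_add' q r := by
    simp only [eval_add, add_mul]
    exact integral_add (integrable_eval_mul h q) (integrable_eval_mul h r)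
  map_smul' c q := by
    simp only [eval_smul, smul_eq_mul, mul_assoc, RingHom.id_apply]
    exact integral_const_mul c _

theorem OPS_solution_is_kernel_polynomials_general (a b : ℝ) (ω : ℝ → ℝ)
    (h_moments : ∀ k : ℕ, IntegrableOn (fun y => y ^ k * ω y) (Ioo a b))
    -- the orthogonal polynomials 𝔭ₖ for L_ω
    (p : ℕ → Polynomial ℝ)
    (hpdeg : ∀ k, (p k).natDegree = k)
    (hporth : ∀ j k, j ≠ k →
      (∫ y in Ioo a b, (p j).eval y * (p k).eval y * ω y) = 0)
    (hpne : ∀ k, (∫ y in Ioo a b, ((p k).eval y) ^ 2 * ω y) ≠ 0)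
    (ζ : ℝ)
    -- the kernel polynomials Kₙ(x;ζ)
    (K : ℕ → ℝ → ℝ)
    (hK : ∀ n x, K n x = ∑ k ∈ Finset.range (n + 1),
      ((p k).eval ζ / (∫ y in Ioo a b, ((p k).eval y) ^ 2 * ω y)) * (p k).eval x)
    -- the sequence (Pₙ): an OPS for L_{(y-ζ)ω} solving the integral equation
    (P : ℕ → Polynomial ℝ)
    (hPdeg : ∀ n, (P n).natDegree = n)
    (hPorth : ∀ n m, n ≠ m →
      (∫ y in Ioo a b, (P n).eval y * (P m).eval y * (y - ζ) * ω y) = 0)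
    (hPne : ∀ n, (∫ y in Ioo a b, ((P n).eval y) ^ 2 * (y - ζ) * ω y) ≠ 0)
    (τ σ : ℝ)
    (heq : ∀ (n : ℕ) (x : ℝ),
      (∫ y in Ioo a b, (P n).eval y * (P n).eval ((y - ζ) * (τ + σ * x) + x) * ω y)
        = (P n).eval x) :
    ∀ (n : ℕ) (x : ℝ), (P n).eval x = K n x := by
  intro n x
  set L := weightedIntegral (volume.restrict (Ioo a b)) ω h_moments
  have hL : ∀ q, L q = ∫ y in Ioo a b, q.eval y * ω y := fun _ => rfl
  have hp : IsOrthogonalSeq L p :=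
    ⟨hpdeg, by simpa [hL] using hporth, by simpa [hL] using hpne⟩
  have hP : IsOrthogonalSeq (L ∘ₗ LinearMap.mulRight ℝ (X - C ζ)) P :=
    ⟨hPdeg, by simpa [hL] using hPorth, by simpa [hL] using hPne⟩
  have hKP := hp.kernelPolynomial_eq_of_integral_equation hP n
    (fun x => (X - C ζ) * C (τ + σ * x) + C x) (fun x => by compute_degree!) (fun x => by simp)
    (fun x => by simpa [hL] using heq n x)
  rw [hK, ← hKP]
  simp [kernelPolynomial, eval_finsetSum, hL]

/-- **Corollary** (uniqueness half) of Dominici, "Polynomial solutions of nonlinear integral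
equations": the only orthogonal polynomial sequence (with respect to `L_{(y-ζ)ω}`) solving
the nonlinear integral equation `∫ Pₙ(y) Pₙ((y-ζ)(τ+σx)+x) ω(y) dy = Pₙ(x)` is the sequence
of kernel polynomials `Kₙ(x;ζ) = Σ_{k=0}^n (𝔭ₖ(ζ)/L_ω[𝔭ₖ²]) 𝔭ₖ(x)`. -/
theorem OPS_solution_is_kernel_polynomials (a b : ℝ) (ω : ℝ → ℝ)
    (hω_nonneg : ∀ y ∈ Ioo a b, 0 ≤ ω y)
    (hω_int : IntegrableOn ω (Ioo a b))
    (hω_norm : (∫ y in Ioo a b, ω y) = 1)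
    (h_moments : ∀ k : ℕ, IntegrableOn (fun y => y ^ k * ω y) (Ioo a b))
    -- the orthogonal polynomials 𝔭ₖ for L_ω
    (p : ℕ → Polynomial ℝ)
    (hpdeg : ∀ k, (p k).natDegree = k)
    (hporth : ∀ j k, j ≠ k →
      (∫ y in Ioo a b, (p j).eval y * (p k).eval y * ω y) = 0)
    (hpne : ∀ k, (∫ y in Ioo a b, ((p k).eval y) ^ 2 * ω y) ≠ 0)
    (ζ : ℝ) (hζ : ζ ∉ Ioo a b)
    (hpζ : ∀ k, (p k).eval ζ ≠ 0)
    -- the kernel polynomials Kₙ(x;ζ)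
    (K : ℕ → ℝ → ℝ)
    (hK : ∀ n x, K n x = ∑ k ∈ Finset.range (n + 1),
      ((p k).eval ζ / (∫ y in Ioo a b, ((p k).eval y) ^ 2 * ω y)) * (p k).eval x)
    -- the sequence (Pₙ): an OPS for L_{(y-ζ)ω} solving the integral equation
    (P : ℕ → Polynomial ℝ)
    (hPdeg : ∀ n, (P n).natDegree = n)
    (hPorth : ∀ n m, n ≠ m →
      (∫ y in Ioo a b, (P n).eval y * (P m).eval y * (y - ζ) * ω y) = 0)
    (hPne : ∀ n, (∫ y in Ioo a b, ((P n).eval y) ^ 2 * (y - ζ) * ω y) ≠ 0)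
    (τ σ : ℝ)
    (heq : ∀ (n : ℕ) (x : ℝ),
      (∫ y in Ioo a b, (P n).eval y * (P n).eval ((y - ζ) * (τ + σ * x) + x) * ω y)
        = (P n).eval x) :
    ∀ (n : ℕ) (x : ℝ), (P n).eval x = K n x :=
  OPS_solution_is_kernel_polynomials_general a b ω h_moments p hpdeg hporth hpne ζ K hK P hPdeg
    hPorth hPne τ σ heq
end

section
/- Let P_2(x) = 7/5 − (1/5)x − (1/10)x². Then (i) ∫_0^∞ P_2(y) P_2(y(1+x) + x) e^{−y} dy = P_2(x) for all real x, and (ii) ∫_0^∞ y·P_2(y)·e^{−y} dy = 2/5 ≠ 0. In particular, the converse of Theorem 3 fails: a sequence of polynomial solutions of the integral equation ∫_0^∞ P_n(y) P_n(y(1+x)+x) e^{−y} dy = P_n(x) need not be an orthogonal polynomial sequence with respect to the functional L_{yω}[f] = ∫_0^∞ f(y)·y·e^{−y} dy. -/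
open MeasureTheory Set

lemma igen (n : ℕ) : IntegrableOn (fun y : ℝ => y ^ n * Real.exp (-y)) (Ioi 0) := by
  have h := Real.GammaIntegral_convergent (s := (n : ℝ) + 1) (by positivity)
  simpa [add_sub_cancel_right, Real.rpow_natCast, mul_comm] using h

lemma moment (n : ℕ) : (∫ y in Ioi (0 : ℝ), y ^ n * Real.exp (-y)) = (n.factorial : ℝ) := by
  have h := Real.Gamma_eq_integral (s := (n : ℝ) + 1) (by positivity)
  rw [Real.Gamma_nat_eq_factorial] at h
  simp only [add_sub_cancel_right, Real.rpow_natCast] at h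
  rw [← h.symm]
  congr 1
  ext y
  ring

lemma quartic (a0 a1 a2 a3 a4 : ℝ) :
    (∫ y in Ioi (0 : ℝ),
      (a0 + a1 * y + a2 * y ^ 2 + a3 * y ^ 3 + a4 * y ^ 4) * Real.exp (-y))
    = a0 + a1 + 2 * a2 + 6 * a3 + 24 * a4 := by
  have h0 := (igen 0).const_mul a0
  have h1 := (igen 1).const_mul a1
  have h2 := (igen 2).const_mul a2
  have h3 := (igen 3).const_mul a3
  have h4 := (igen 4).const_mul a4
  have e0 : (∫ y in Ioi (0 : ℝ), a0 * (y ^ 0 * Real.exp (-y))) = a0 := by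
    rw [integral_const_mul, moment]; norm_num
  have e1 : (∫ y in Ioi (0 : ℝ), a1 * (y ^ 1 * Real.exp (-y))) = a1 := by
    rw [integral_const_mul, moment]; norm_num
  have e2 : (∫ y in Ioi (0 : ℝ), a2 * (y ^ 2 * Real.exp (-y))) = 2 * a2 := by
    rw [integral_const_mul, moment]; norm_num [Nat.factorial]; ring
  have e3 : (∫ y in Ioi (0 : ℝ), a3 * (y ^ 3 * Real.exp (-y))) = 6 * a3 := by
    rw [integral_const_mul, moment]; norm_num [Nat.factorial]; ring
  have e4 : (∫ y in Ioi (0 : ℝ), a4 * (y ^ 4 * Real.exp (-y))) = 24 * a4 := by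
    rw [integral_const_mul, moment]; norm_num [Nat.factorial]; ring
  have h34 : IntegrableOn (fun y : ℝ => a3 * (y ^ 3 * Real.exp (-y)) +
      a4 * (y ^ 4 * Real.exp (-y))) (Ioi 0) := h3.add h4
  have h234 : IntegrableOn (fun y : ℝ => a2 * (y ^ 2 * Real.exp (-y)) +
      (a3 * (y ^ 3 * Real.exp (-y)) + a4 * (y ^ 4 * Real.exp (-y)))) (Ioi 0) := h2.add h34
  have h1234 : IntegrableOn (fun y : ℝ => a1 * (y ^ 1 * Real.exp (-y)) +
      (a2 * (y ^ 2 * Real.exp (-y)) + (a3 * (y ^ 3 * Real.exp (-y)) +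
       a4 * (y ^ 4 * Real.exp (-y))))) (Ioi 0) := h1.add h234
  have e34 : (∫ y in Ioi (0 : ℝ),
      (a3 * (y ^ 3 * Real.exp (-y)) + a4 * (y ^ 4 * Real.exp (-y))))
      = 6 * a3 + 24 * a4 := by rw [integral_add h3 h4, e3, e4]
  have e234 : (∫ y in Ioi (0 : ℝ),
      (a2 * (y ^ 2 * Real.exp (-y)) + (a3 * (y ^ 3 * Real.exp (-y)) +
        a4 * (y ^ 4 * Real.exp (-y)))))
      = 2 * a2 + (6 * a3 + 24 * a4) := by rw [integral_add h2 h34, e2, e34]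
  have e1234 : (∫ y in Ioi (0 : ℝ),
      (a1 * (y ^ 1 * Real.exp (-y)) + (a2 * (y ^ 2 * Real.exp (-y)) +
        (a3 * (y ^ 3 * Real.exp (-y)) + a4 * (y ^ 4 * Real.exp (-y))))))
      = a1 + (2 * a2 + (6 * a3 + 24 * a4)) := by
    rw [integral_add h1 h234, e1, e234]
  have key : (∫ y in Ioi (0 : ℝ),
      (a0 + a1 * y + a2 * y ^ 2 + a3 * y ^ 3 + a4 * y ^ 4) * Real.exp (-y))
      = ∫ y in Ioi (0 : ℝ),
        (a0 * (y ^ 0 * Real.exp (-y)) + (a1 * (y ^ 1 * Real.exp (-y)) +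
         (a2 * (y ^ 2 * Real.exp (-y)) + (a3 * (y ^ 3 * Real.exp (-y)) +
          a4 * (y ^ 4 * Real.exp (-y)))))) := by
    congr 1; ext y; ring
  rw [key, integral_add h0 h1234, e0, e1234]
  ring

/-- Counterexample to the converse of Theorem 3: `P₂(x) = 7/5 - x/5 - x²/10` solves
`∫₀^∞ P₂(y) P₂(y(1+x)+x) e^{-y} dy = P₂(x)`, yet `∫₀^∞ y P₂(y) e^{-y} dy = 2/5 ≠ 0`,
so `P₂` is not orthogonal to constants with respect to `L_{yω}`. -/
theorem converse_fails_counterexample (P : ℝ → ℝ)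
    (hP : ∀ x, P x = 7 / 5 - (1 / 5) * x - (1 / 10) * x ^ 2) :
    (∀ x : ℝ,
      (∫ y in Ioi (0 : ℝ), P y * P (y * (1 + x) + x) * Real.exp (-y)) = P x) ∧
    (∫ y in Ioi (0 : ℝ), y * P y * Real.exp (-y)) = 2 / 5 ∧
    (2 / 5 : ℝ) ≠ 0 := by
  refine ⟨fun x => ?_, ?_, by norm_num⟩
  · have key : (∫ y in Ioi (0 : ℝ), P y * P (y * (1 + x) + x) * Real.exp (-y))
        = ∫ y in Ioi (0 : ℝ),
          ((49/25 - 7/25 * x - 7/50 * x ^ 2)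
           + (-14/25 - 13/25 * x - 13/50 * x ^ 2) * y
           + (-6/25 - 9/50 * x - 9/100 * x ^ 2) * y ^ 2
           + (1/25 + 2/25 * x + 1/25 * x ^ 2) * y ^ 3
           + (1/100 + 1/50 * x + 1/100 * x ^ 2) * y ^ 4) * Real.exp (-y) := by
      congr 1; ext y; rw [hP y, hP (y * (1 + x) + x)]; ring
    rw [key, quartic, hP]; ring
  · have key : (∫ y in Ioi (0 : ℝ), y * P y * Real.exp (-y))
        = ∫ y in Ioi (0 : ℝ),
          ((0 : ℝ) + (7/5) * y + (-1/5) * y ^ 2 + (-1/10) * y ^ 3 + 0 * y ^ 4)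
            * Real.exp (-y) := by
      congr 1; ext y; rw [hP y]; ring
    rw [key, quartic]; norm_num
end

section
/- For each n ≥ 0, define P_n(x) = Σ_{k=0}^{n} (2k+1) 𝐏_k(x), where 𝐏_k denotes the k-th Legendre polynomial. Then (1/2)·∫_{−1}^{1} P_n(y) P_n(x + y − 1) dy = P_n(x) for all real x. -/
/-!
Substituting `t = (1 - y) / 2`, `𝐏ₖ(y)` becomes the shifted Legendre polynomial `Lₖ(t)` and
`Pₙ(y) = Kₙ(t)` with `Kₙ = Σ_{j ≤ n} (2j+1) Lⱼ`; also `Pₙ(x + y - 1) = Kₙ(t + (1 - x)/2)`. So the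
claim is the reproducing property `∫₀¹ Kₙ(t) q(t) dt = q(0)` for `q` of degree `≤ n`, i.e.
`∫₀¹ Kₙ(t) tʳ dt = δ_{r0}` for `r ≤ n`.

The moments of `Lⱼ` are `∫₀¹ Lⱼ(t) tʳ dt = (-r)ⱼ / (r+1)ⱼ₊₁` (rising factorials). Indeed
`j! (j+k choose j) = (k+1)ⱼ`; dividing `(X+1)ⱼ` by `X + r + 1` leaves a quotient of degree `< j`,
killed by the `j`-th forward difference `Σₖ (-1)ᵏ (j choose k) f(k)`, and a constant times
`Σₖ (-1)ᵏ (j choose k) / (r+k+1) = j! / (r+1)ⱼ₊₁`. Finally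
`r (2j+1) (-r)ⱼ / (r+1)ⱼ₊₁ = Tⱼ - Tⱼ₊₁` with `Tⱼ = j (-r)ⱼ / (r+1)ⱼ`, and `T_{n+1} = 0` for
`r ≤ n`, so the sum over `j ≤ n` telescopes.
-/

open MeasureTheory Set

/-- The Legendre polynomial `𝐏ₙ(x) = Σ_{k=0}^n (n choose k)(-n-1 choose k)((1-x)/2)ᵏ`,
using the identity `(-n-1 choose k) = (-1)ᵏ (n+k choose k)`. -/
noncomputable def legendreP (n : ℕ) (x : ℝ) : ℝ :=
  ∑ k ∈ Finset.range (n + 1),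
    (n.choose k : ℝ) * ((-1 : ℝ) ^ k * ((n + k).choose k : ℝ)) * ((1 - x) / 2) ^ k

open Polynomial Finset fwdDiff
open scoped Nat

lemma sum_range_neg_one_pow_mul_choose_mul_eq_fwdDiff_iter {R : Type*} [CommRing R]
    (f : R → R) (j : ℕ) (y : R) :
    ∑ k ∈ range (j + 1), (-1) ^ k * (j.choose k : R) * f (y + k) = (-1) ^ j * Δ_[1] ^[j] f y := by
  rw [fwdDiff_iter_eq_sum_shift, mul_sum]
  refine sum_congr rfl fun k hk => ?_
  obtain ⟨i, rfl⟩ := Nat.exists_eq_add_of_le (Nat.lt_succ_iff.mp (mem_range.mp hk))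
  simp only [zsmul_eq_mul, nsmul_eq_mul, mul_one, Nat.add_sub_cancel_left]
  push_cast
  rw [pow_add]
  ring_nf
  rw [pow_mul', neg_one_sq, one_pow, mul_one]

lemma fwdDiff_iter_eval_eq_zero_of_degree_lt {R : Type*} [CommRing R] {p : R[X]} {n : ℕ}
    (hp : p.degree < n) : Δ_[1] ^[n] p.eval = 0 := by
  rcases eq_or_ne p 0 with rfl | hp0
  · simp only [eval_zero]
    exact Function.iterate_fixed (fwdDiff_const (1 : R) (0 : R)) n
  · exact fwdDiff_iter_eq_zero_of_degree_lt ((natDegree_lt_iff_degree_lt hp0).2 hp)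

lemma ascPochhammer_succ_eval_left {S : Type*} [CommSemiring S] (n : ℕ) (x : S) :
    (ascPochhammer S (n + 1)).eval x = x * (ascPochhammer S n).eval (x + 1) := by
  rw [ascPochhammer_succ_left, eval_mul, eval_X, eval_comp, eval_add, eval_X, eval_one]

lemma choose_add_mul_factorial_eq_eval_ascPochhammer {S : Type*} [CommSemiring S] (j k : ℕ) :
    ((j + k).choose j : S) * j ! = (ascPochhammer S j).eval ((k : S) + 1) := by
  rw [← Nat.cast_add_one, ascPochhammer_nat_eq_natCast_ascFactorial,
    Nat.ascFactorial_eq_factorial_mul_choose, add_comm k]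
  push_cast
  ring

lemma fwdDiff_iter_inv_add_one (j : ℕ) {x : ℝ} (hx : 0 ≤ x) :
    Δ_[1] ^[j] (fun x : ℝ => (x + 1)⁻¹) x
      = (-1) ^ j * j ! / (ascPochhammer ℝ (j + 1)).eval (x + 1) := by
  induction j generalizing x with
  | zero => simp
  | succ j ih =>
    rw [Function.iterate_succ_apply', fwdDiff, ih (by linarith), ih hx]
    have ha := ascPochhammer_pos (j + 1) (x + 1 + 1) (by linarith)
    have hb := ascPochhammer_pos (j + 1) (x + 1) (by linarith)
    have hleft := ascPochhammer_succ_eval_left (j + 1) (x + 1)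
    have hright := ascPochhammer_succ_eval (j + 1) (x + 1)
    rw [hleft] at hright ⊢
    push_cast [Nat.factorial_succ] at hright ⊢
    field_simp
    linear_combination (-(-1) ^ j : ℝ) * hright

lemma sum_range_neg_one_pow_mul_choose_div (j : ℕ) {r : ℝ} (hr : 0 ≤ r) :
    ∑ k ∈ range (j + 1), (-1) ^ k * (j.choose k : ℝ) / (r + k + 1)
      = j ! / (ascPochhammer ℝ (j + 1)).eval (r + 1) := by
  have h := sum_range_neg_one_pow_mul_choose_mul_eq_fwdDiff_iter (fun x : ℝ => (x + 1)⁻¹) j r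
  rw [fwdDiff_iter_inv_add_one j hr, ← mul_div_assoc, ← mul_assoc, ← pow_add, ← two_mul,
    pow_mul] at h
  simpa [div_eq_mul_inv] using h

lemma sum_range_shiftedLegendre_coeff_div (j : ℕ) {r : ℝ} (hr : 0 ≤ r) :
    ∑ k ∈ range (j + 1), (-1) ^ k * (j.choose k : ℝ) * ((j + k).choose j : ℝ) / (r + k + 1)
      = (ascPochhammer ℝ j).eval (-r) / (ascPochhammer ℝ (j + 1)).eval (r + 1) := by
  set A := ascPochhammer ℝ j
  set Q := (A - C (A.eval (-r))) /ₘ (X - C (-r))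
  have hdiv : (X - C (-r)) * Q = A - C (A.eval (-r)) :=
    mul_divByMonic_eq_iff_isRoot.mpr (by simp)
  have hQ : Q.degree < j := by
    rcases eq_or_ne (A - C (A.eval (-r))) 0 with h | h
    · simp [Q, h]
    · calc Q.degree < (A - C (A.eval (-r))).degree :=
            degree_divByMonic_lt _ _ h (by rw [degree_X_sub_C]; exact zero_lt_one)
        _ ≤ j := degree_le_of_natDegree_le (by rw [natDegree_sub_C, ascPochhammer_natDegree])
  have hsplit : ∀ k : ℕ, ((j + k).choose j : ℝ) / (r + k + 1)
      = (Q.eval (1 + (k : ℝ)) + A.eval (-r) / (r + k + 1)) / j ! := by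
    intro k
    have hk : A.eval ((k : ℝ) + 1) = (r + k + 1) * Q.eval (1 + (k : ℝ)) + A.eval (-r) := by
      have := congrArg (eval ((k : ℝ) + 1)) hdiv
      simp only [eval_mul, eval_sub, eval_X, eval_C] at this
      rw [add_comm 1 (k : ℝ)]
      linear_combination -this
    rw [← choose_add_mul_factorial_eq_eval_ascPochhammer] at hk
    have : r + k + 1 ≠ 0 := by positivity
    field_simp
    linear_combination hk
  have hQsum := sum_range_neg_one_pow_mul_choose_mul_eq_fwdDiff_iter Q.eval j 1
  rw [fwdDiff_iter_eval_eq_zero_of_degree_lt hQ, Pi.zero_apply, mul_zero] at hQsum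
  calc ∑ k ∈ range (j + 1), (-1) ^ k * (j.choose k : ℝ) * ((j + k).choose j : ℝ) / (r + k + 1)
      = (∑ k ∈ range (j + 1), (-1) ^ k * (j.choose k : ℝ) * Q.eval (1 + (k : ℝ))
          + A.eval (-r) * ∑ k ∈ range (j + 1), (-1) ^ k * (j.choose k : ℝ) / (r + k + 1)) / j ! := by
        rw [mul_sum, ← sum_add_distrib, sum_div]
        refine sum_congr rfl fun k _ => ?_
        rw [mul_div_assoc, hsplit]
        ring
    _ = A.eval (-r) / (ascPochhammer ℝ (j + 1)).eval (r + 1) := by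
        rw [hQsum, sum_range_neg_one_pow_mul_choose_div j hr]
        field_simp
        ring

lemma sum_range_two_mul_add_one_mul_ascPochhammer_div {n r : ℕ} (hrn : r ≤ n) :
    ∑ j ∈ range (n + 1), (2 * (j : ℝ) + 1) *
        ((ascPochhammer ℝ j).eval (-(r : ℝ)) / (ascPochhammer ℝ (j + 1)).eval ((r : ℝ) + 1))
      = if r = 0 then 1 else 0 := by
  rcases eq_or_ne r 0 with rfl | hr
  · rw [sum_eq_single 0 (fun j _ hj => by simp [hj]) (by simp)]
    simp
  set T : ℕ → ℝ := fun j =>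
    j * (ascPochhammer ℝ j).eval (-(r : ℝ)) / (ascPochhammer ℝ j).eval ((r : ℝ) + 1)
  have htel : ∀ j : ℕ, (r : ℝ) * ((2 * (j : ℝ) + 1) *
      ((ascPochhammer ℝ j).eval (-(r : ℝ)) / (ascPochhammer ℝ (j + 1)).eval ((r : ℝ) + 1)))
        = T j - T (j + 1) := by
    intro j
    have hpos := ascPochhammer_pos j ((r : ℝ) + 1) (by positivity)
    simp only [T, ascPochhammer_succ_eval]
    push_cast
    field_simp
    ring
  have hsum := sum_range_sub' T (n + 1)
  rw [← sum_congr rfl fun j _ => htel j, ← mul_sum] at hsum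
  have hT0 : T 0 = 0 := by simp [T]
  have hTn : T (n + 1) = 0 := by
    simp [T, ascPochhammer_eval_neg_coe_nat_of_lt (Nat.lt_succ_of_le hrn)]
  rw [hT0, hTn, sub_zero] at hsum
  simpa [hr] using hsum

lemma integral_eval_mul_pow {p : ℝ[X]} {N : ℕ} (hp : p.natDegree < N) (r : ℕ) :
    ∫ t in (0 : ℝ)..1, p.eval t * t ^ r = ∑ k ∈ range N, p.coeff k / (k + r + 1) := by
  simp_rw [eval_eq_sum_range' hp, sum_mul, mul_assoc, ← pow_add]
  rw [intervalIntegral.integral_finsetSum fun k _ =>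
    (by fun_prop : Continuous _).intervalIntegrable _ _]
  refine sum_congr rfl fun k _ => ?_
  rw [intervalIntegral.integral_const_mul, integral_pow]
  push_cast
  ring

lemma integral_shiftedLegendre_mul_pow (j r : ℕ) :
    ∫ t in (0 : ℝ)..1, ((shiftedLegendre j).map (Int.castRingHom ℝ)).eval t * t ^ r
      = (ascPochhammer ℝ j).eval (-(r : ℝ)) / (ascPochhammer ℝ (j + 1)).eval ((r : ℝ) + 1) := by
  rw [integral_eval_mul_pow (N := j + 1) ((natDegree_map_le).trans_lt (by simp)),
    ← sum_range_shiftedLegendre_coeff_div j r.cast_nonneg]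
  refine sum_congr rfl fun k _ => ?_
  rw [coeff_map, coeff_shiftedLegendre, eq_intCast]
  push_cast
  ring

noncomputable def legendreKernel (n : ℕ) : ℝ[X] :=
  ∑ j ∈ range (n + 1), C (2 * (j : ℝ) + 1) * (shiftedLegendre j).map (Int.castRingHom ℝ)

lemma natDegree_legendreKernel_le (n : ℕ) : (legendreKernel n).natDegree ≤ n := by
  refine natDegree_sum_le_of_forall_le _ _ fun j hj => ?_
  refine (natDegree_C_mul_le _ _).trans (natDegree_map_le.trans ?_)
  simpa using Nat.lt_succ_iff.mp (mem_range.mp hj)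

lemma integral_legendreKernel_mul_pow {n r : ℕ} (hrn : r ≤ n) :
    ∫ t in (0 : ℝ)..1, (legendreKernel n).eval t * t ^ r = if r = 0 then 1 else 0 := by
  simp_rw [legendreKernel, eval_finsetSum, eval_mul, eval_C, sum_mul, mul_assoc]
  rw [intervalIntegral.integral_finsetSum fun j _ =>
    (by fun_prop : Continuous _).intervalIntegrable _ _]
  simp_rw [intervalIntegral.integral_const_mul, integral_shiftedLegendre_mul_pow]
  exact sum_range_two_mul_add_one_mul_ascPochhammer_div hrn

lemma integral_legendreKernel_mul_eval {n : ℕ} {q : ℝ[X]} (hq : q.natDegree ≤ n) :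
    ∫ t in (0 : ℝ)..1, (legendreKernel n).eval t * q.eval t = q.eval 0 := by
  rw [← coeff_zero_eq_eval_zero]
  simp_rw [eval_eq_sum_range' (Nat.lt_succ_of_le hq), mul_sum, mul_left_comm _ (q.coeff _)]
  rw [intervalIntegral.integral_finsetSum fun j _ =>
    (by fun_prop : Continuous _).intervalIntegrable _ _]
  rw [sum_congr rfl fun j hj => by rw [intervalIntegral.integral_const_mul,
    integral_legendreKernel_mul_pow (Nat.lt_succ_iff.mp (mem_range.mp hj))]]
  simp

lemma legendreP_eq_eval_shiftedLegendre (n : ℕ) (x : ℝ) :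
    legendreP n x = ((shiftedLegendre n).map (Int.castRingHom ℝ)).eval ((1 - x) / 2) := by
  rw [legendreP, eval_eq_sum_range' ((natDegree_map_le).trans_lt (by simp : _ < n + 1))]
  refine sum_congr rfl fun k _ => ?_
  rw [coeff_map, coeff_shiftedLegendre, eq_intCast, Nat.choose_symm_add]
  push_cast
  ring

lemma sum_two_mul_add_one_mul_legendreP (n : ℕ) (x : ℝ) :
    ∑ k ∈ range (n + 1), (2 * (k : ℝ) + 1) * legendreP k x
      = (legendreKernel n).eval ((1 - x) / 2) := by
  simp [legendreKernel, eval_finsetSum, legendreP_eq_eval_shiftedLegendre]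

lemma half_mul_setIntegral_Ioo_comp (g : ℝ → ℝ) :
    1 / 2 * ∫ y in Ioo (-1 : ℝ) 1, g ((1 - y) / 2) = ∫ t in (0 : ℝ)..1, g t := by
  rw [← integral_Ioc_eq_integral_Ioo, ← intervalIntegral.integral_of_le (by norm_num)]
  simp_rw [sub_div]
  rw [intervalIntegral.integral_comp_sub_div _ two_ne_zero]
  norm_num
  ring

/-- Legendre example of Dominici (`ω = 1/2` on `(-1,1)`, `ζ = 1`, `τ = 1`, `σ = 0`):
the kernel polynomials `Pₙ(x) = Σ_{k=0}^n (2k+1) 𝐏ₖ(x)` satisfy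
`(1/2)·∫_{-1}^1 Pₙ(y) Pₙ(x+y-1) dy = Pₙ(x)`. -/
theorem legendre_kernel_example (P : ℕ → ℝ → ℝ)
    (hP : ∀ n x, P n x = ∑ k ∈ Finset.range (n + 1), (2 * (k : ℝ) + 1) * legendreP k x) :
    ∀ (n : ℕ) (x : ℝ),
      (1 / 2) * (∫ y in Ioo (-1 : ℝ) 1, P n y * P n (x + y - 1)) = P n x := by
  intro n x
  set K := legendreKernel n
  set q := K.comp (X + C ((1 - x) / 2))
  have hPK : ∀ y, P n y = K.eval ((1 - y) / 2) := fun y => by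
    rw [hP, sum_two_mul_add_one_mul_legendreP]
  have hshift : ∀ y, P n (x + y - 1) = q.eval ((1 - y) / 2) := fun y => by
    rw [hPK, eval_comp, eval_add, eval_X, eval_C]
    ring_nf
  have hq : q.natDegree ≤ n := by
    rw [natDegree_comp, natDegree_X_add_C, mul_one]
    exact natDegree_legendreKernel_le n
  simp_rw [hshift, hPK]
  rw [half_mul_setIntegral_Ioo_comp (fun t => K.eval t * q.eval t),
    integral_legendreKernel_mul_eval hq]
  simp [q]
end

section
/- For each n ≥ 0, define P_n(x) = Σ_{k=0}^{n} L_k(x), where L_k denotes the k-th Laguerre polynomial. Then (i) ∫_0^∞ P_n(y) P_n(y(1+x) + x) e^{−y} dy = P_n(x) for all real x, and (ii) the sequence (P_n) is an orthogonal polynomial sequence with respect to the functional L_{yω}[f] = ∫_0^∞ f(y)·y·e^{−y} dy, i.e., ∫_0^∞ P_n(y) P_m(y)·y·e^{−y} dy = 0 for n ≠ m and ≠ 0 for n = m. -/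
open MeasureTheory Set

/-- The Laguerre polynomial `Lₙ(x) = Σ_{k=0}^n (1/k!)(n choose k)(-x)ᵏ`. -/
noncomputable def laguerreL (n : ℕ) (x : ℝ) : ℝ :=
  ∑ k ∈ Finset.range (n + 1), (1 / (k.factorial : ℝ)) * (n.choose k : ℝ) * (-x) ^ k

/-!
`Kₙ = ∑_{k ≤ n} Lₖ` reproduces the value at `0` of every polynomial `q` of degree `≤ n`:
`∫₀^∞ Kₙ(y) q(y) e^{-y} dy = q(0)`. By linearity it suffices to take `q = yʲ`. Summing the
Laguerre coefficients with the hockey-stick identity gives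
`Kₙ(y) = ∑_{i ≤ n} (-1)ⁱ C(n+1, i+1) yⁱ / i!`, and since `∫₀^∞ yᵐ e^{-y} dy = m!`, the integral
becomes `∑_i (-1)ⁱ C(n+1, i+1) (i+1)⋯(i+j)`: up to its `i = -1` term, which is `[j = 0]`, this is
an `(n+1)`-st forward difference of the rising factorial `x(x+1)⋯(x+j-1)`, a polynomial of
degree `j < n + 1`, hence zero.

Part (i) is the case `q(y) = Kₙ((1+x)y + x)`, and part (ii) the case `q(y) = y Kₘ(y)` with `m < n`.
For (iii), the integrand `Kₙ(y)² y e^{-y}` is nonnegative on `(0, ∞)` and vanishes only at the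
finitely many roots of `Kₙ ≠ 0`.
-/

open Polynomial Finset Real
open scoped Nat

theorem Polynomial.sum_range_neg_one_pow_mul_choose_mul_eval_eq_zero {R : Type*} [CommRing R]
    {p : R[X]} {n : ℕ} (hp : p.natDegree < n) :
    ∑ k ∈ range (n + 1), (-1) ^ k * n.choose k * p.eval (k : R) = 0 := by
  have h := congrFun (fwdDiff_iter_eq_zero_of_degree_lt hp) 0
  rw [fwdDiff_iter_eq_sum_shift, Pi.zero_apply] at h
  rw [← mul_eq_zero_of_right ((-1) ^ n) h, mul_sum]
  refine sum_congr rfl fun k hk => ?_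
  obtain ⟨d, rfl⟩ := Nat.exists_eq_add_of_le (Nat.lt_succ_iff.mp (mem_range.mp hk))
  have hsign : (-1 : R) ^ k = (-1) ^ (k + d) * (-1) ^ d := by
    rw [pow_add, mul_assoc, ← pow_add, ← two_mul, pow_mul, neg_one_sq, one_pow, mul_one]
  rw [hsign]
  simp only [zsmul_eq_mul, Nat.add_sub_cancel_left, nsmul_one, zero_add]
  push_cast
  ring

theorem Nat.sum_range_choose_eq_choose_succ_succ (n i : ℕ) :
    ∑ k ∈ range (n + 1), k.choose i = (n + 1).choose (i + 1) := by
  induction n with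
  | zero => rcases i with _ | i <;> simp [Nat.choose_eq_zero_of_lt]
  | succ n ih => rw [sum_range_succ, ih, Nat.choose_succ_succ' (n + 1), add_comm]

theorem sum_neg_one_pow_mul_choose_succ_mul_factorial_add {n j : ℕ} (hj : j ≤ n) :
    ∑ i ∈ range (n + 1), (-1 : ℝ) ^ i * (n + 1).choose (i + 1) * ((i + j)! / i !) =
      if j = 0 then 1 else 0 := by
  have hdeg : (ascPochhammer ℝ j).natDegree < n + 1 := by
    rw [ascPochhammer_natDegree]; omega
  have h := sum_range_neg_one_pow_mul_choose_mul_eval_eq_zero hdeg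
  have hpoch (i : ℕ) : (ascPochhammer ℝ j).eval ((i + 1 : ℕ) : ℝ) = (i + j)! / i ! := by
    rw [← ascPochhammer_eval_cast, ascPochhammer_nat_eq_ascFactorial, eq_div_iff (by positivity),
      mul_comm]
    exact_mod_cast Nat.factorial_mul_ascFactorial i j
  rw [sum_range_succ'] at h
  simp only [hpoch, pow_succ, Nat.cast_zero, pow_zero, Nat.choose_zero_right,
    Nat.cast_one, one_mul, ascPochhammer_eval_zero, mul_neg_one, neg_mul, sum_neg_distrib] at h
  linarith

/-- `Kₙ(x; 0) = ∑_{k ≤ n} Lₖ(x)` in the closed form given by the hockey-stick identity; it is the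
associated Laguerre polynomial `Lₙ⁽¹⁾`. -/
noncomputable def laguerreKernel (n : ℕ) : ℝ[X] :=
  ∑ i ∈ range (n + 1), C ((-1) ^ i * ((n + 1).choose (i + 1) : ℝ) / i !) * X ^ i

theorem laguerreKernel_eval (n : ℕ) (x : ℝ) :
    (laguerreKernel n).eval x = ∑ k ∈ range (n + 1), laguerreL k x := by
  have hL : ∀ k ∈ range (n + 1),
      laguerreL k x = ∑ i ∈ range (n + 1), 1 / (i ! : ℝ) * k.choose i * (-x) ^ i := by
    intro k hk
    refine sum_subset (range_subset_range.mpr (by simpa using hk)) fun i _ hi => ?_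
    rw [Nat.choose_eq_zero_of_lt (by simpa using hi)]
    simp
  rw [sum_congr rfl hL, sum_comm, laguerreKernel, eval_finsetSum]
  refine sum_congr rfl fun i _ => ?_
  rw [← sum_mul, ← mul_sum, ← Nat.cast_sum, Nat.sum_range_choose_eq_choose_succ_succ]
  simp only [eval_mul, eval_C, eval_pow, eval_X, neg_pow x]
  ring

theorem laguerreKernel_natDegree_le (n : ℕ) : (laguerreKernel n).natDegree ≤ n :=
  natDegree_sum_le_of_forall_le _ _ fun _ hi =>
    (natDegree_C_mul_X_pow_le _ _).trans (Nat.lt_succ_iff.mp (mem_range.mp hi))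

theorem laguerreKernel_eval_zero (n : ℕ) : (laguerreKernel n).eval 0 = n + 1 := by
  simp [laguerreKernel, eval_finsetSum, sum_range_succ']

theorem integrableOn_pow_mul_exp_neg_Ioi (j : ℕ) :
    IntegrableOn (fun y : ℝ => y ^ j * exp (-y)) (Ioi 0) := by
  refine (GammaIntegral_convergent (s := (j : ℝ) + 1) (by positivity)).congr_fun
    (fun y _ => ?_) measurableSet_Ioi
  simp only [add_sub_cancel_right, rpow_natCast, mul_comm]

theorem integral_pow_mul_exp_neg_Ioi (j : ℕ) : ∫ y in Ioi 0, y ^ j * exp (-y) = j ! := by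
  rw [← Gamma_nat_eq_factorial, Gamma_eq_integral (by positivity)]
  refine setIntegral_congr_fun measurableSet_Ioi fun y _ => ?_
  simp only [add_sub_cancel_right, rpow_natCast, mul_comm]

theorem integrableOn_eval_mul_exp_neg_Ioi (p : ℝ[X]) :
    IntegrableOn (fun y => p.eval y * exp (-y)) (Ioi 0) := by
  simp only [eval_eq_sum_range, sum_mul, mul_assoc]
  exact integrable_finsetSum _ fun i _ => (integrableOn_pow_mul_exp_neg_Ioi i).const_mul _

theorem integral_laguerreKernel_mul_pow_mul_exp_neg {n j : ℕ} (hj : j ≤ n) :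
    ∫ y in Ioi 0, (laguerreKernel n).eval y * y ^ j * exp (-y) = if j = 0 then 1 else 0 := by
  have hexpand (y : ℝ) : (laguerreKernel n).eval y * y ^ j * exp (-y) =
      ∑ i ∈ range (n + 1), (-1) ^ i * (n + 1).choose (i + 1) / i ! * (y ^ (i + j) * exp (-y)) := by
    simp only [laguerreKernel, eval_finsetSum, eval_mul, eval_C, eval_pow, eval_X, sum_mul, pow_add]
    exact sum_congr rfl fun i _ => by ring
  simp only [hexpand]
  rw [integral_finsetSum _ fun i _ => (integrableOn_pow_mul_exp_neg_Ioi _).const_mul _,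
    ← sum_neg_one_pow_mul_choose_succ_mul_factorial_add hj]
  refine sum_congr rfl fun i _ => ?_
  rw [integral_const_mul, integral_pow_mul_exp_neg_Ioi]
  ring

theorem integral_laguerreKernel_mul_eval_mul_exp_neg {n : ℕ} {q : ℝ[X]} (hq : q.natDegree ≤ n) :
    ∫ y in Ioi 0, (laguerreKernel n).eval y * q.eval y * exp (-y) = q.eval 0 := by
  have hexpand (y : ℝ) : (laguerreKernel n).eval y * q.eval y * exp (-y) =
      ∑ j ∈ range (n + 1), q.coeff j * ((laguerreKernel n).eval y * y ^ j * exp (-y)) := by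
    rw [eval_eq_sum_range' (Nat.lt_succ_of_le hq), mul_sum, sum_mul]
    exact sum_congr rfl fun j _ => by ring
  have hint (j : ℕ) : IntegrableOn (fun y => (laguerreKernel n).eval y * y ^ j * exp (-y)) (Ioi 0) := by
    have := integrableOn_eval_mul_exp_neg_Ioi (laguerreKernel n * X ^ j)
    simp only [eval_mul, eval_pow, eval_X] at this
    exact this
  simp only [hexpand]
  rw [integral_finsetSum _ fun j _ => (hint j).const_mul _]
  rw [sum_congr rfl fun j hj => by
    rw [integral_const_mul, integral_laguerreKernel_mul_pow_mul_exp_neg (mem_range_succ_iff.mp hj)]]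
  simp [coeff_zero_eq_eval_zero]

theorem integral_laguerreKernel_mul_comp_affine_mul_exp_neg (n : ℕ) (a b : ℝ) :
    ∫ y in Ioi 0, (laguerreKernel n).eval y * (laguerreKernel n).eval (a * y + b) * exp (-y) =
      (laguerreKernel n).eval b := by
  have hlin : (C a * X + C b).natDegree ≤ 1 := natDegree_linear_le
  have hdeg : ((laguerreKernel n).comp (C a * X + C b)).natDegree ≤ n :=
    natDegree_comp_le.trans (by simpa using Nat.mul_le_mul (laguerreKernel_natDegree_le n) hlin)
  simpa using integral_laguerreKernel_mul_eval_mul_exp_neg hdeg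

theorem integral_laguerreKernel_mul_laguerreKernel_mul_exp_neg_of_ne {m n : ℕ} (h : n ≠ m) :
    ∫ y in Ioi 0, (laguerreKernel n).eval y * (laguerreKernel m).eval y * y * exp (-y) = 0 := by
  wlog hlt : m < n generalizing m n
  · simpa only [mul_comm ((laguerreKernel n).eval _)] using this h.symm (by omega)
  have hdeg : (X * laguerreKernel m).natDegree ≤ n :=
    natDegree_mul_le.trans (by have := laguerreKernel_natDegree_le m; simp; omega)
  simpa [mul_comm, mul_assoc, mul_left_comm] using
    integral_laguerreKernel_mul_eval_mul_exp_neg hdeg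

theorem laguerreKernel_ne_zero (n : ℕ) : laguerreKernel n ≠ 0 := fun h => by
  have := laguerreKernel_eval_zero n
  rw [h, eval_zero] at this
  exact n.cast_add_one_ne_zero this.symm

theorem integral_eval_mul_eval_mul_mul_exp_neg_pos {p : ℝ[X]} (hp : p ≠ 0) :
    0 < ∫ y in Ioi 0, p.eval y * p.eval y * y * exp (-y) := by
  have hint : IntegrableOn (fun y => p.eval y * p.eval y * y * exp (-y)) (Ioi 0) := by
    have := integrableOn_eval_mul_exp_neg_Ioi (p * p * X)
    simp only [eval_mul, eval_X] at this
    exact this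
  have hnonneg : 0 ≤ᵐ[volume.restrict (Ioi 0)] fun y => p.eval y * p.eval y * y * exp (-y) := by
    filter_upwards [ae_restrict_mem measurableSet_Ioi] with y (hy : 0 < y)
    have := mul_self_nonneg (p.eval y)
    positivity
  have hsupp : Ioi (0 : ℝ) \ {y | p.IsRoot y} ⊆
      Function.support (fun y => p.eval y * p.eval y * y * exp (-y)) ∩ Ioi 0 := by
    rintro y ⟨hy : 0 < y, hroot⟩
    have := mul_self_pos.mpr hroot
    exact ⟨(by positivity : 0 < p.eval y * p.eval y * y * exp (-y)).ne', hy⟩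
  rw [setIntegral_pos_iff_support_of_nonneg_ae hnonneg hint]
  calc 0 < volume (Ioi (0 : ℝ) \ {y | p.IsRoot y}) := by
        rw [measure_sdiff_null ((finite_setOfPred_isRoot hp).measure_zero _), volume_Ioi]
        exact ENNReal.zero_lt_top
    _ ≤ _ := measure_mono hsupp

/-- Laguerre example of Dominici (`ω(y) = e^{-y}` on `(0,∞)`, `ζ = 0`, `τ = 1`, `σ = 1`):
the kernel polynomials `Pₙ(x) = Σ_{k=0}^n Lₖ(x)` satisfy
`∫₀^∞ Pₙ(y) Pₙ(y(1+x)+x) e^{-y} dy = Pₙ(x)` and form an OPS for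
`L_{yω}[f] = ∫₀^∞ f(y)·y·e^{-y} dy`. -/
theorem laguerre_kernel_example (P : ℕ → ℝ → ℝ)
    (hP : ∀ n x, P n x = ∑ k ∈ Finset.range (n + 1), laguerreL k x) :
    (∀ (n : ℕ) (x : ℝ),
      (∫ y in Ioi (0 : ℝ), P n y * P n (y * (1 + x) + x) * Real.exp (-y)) = P n x) ∧
    (∀ n m : ℕ, n ≠ m →
      (∫ y in Ioi (0 : ℝ), P n y * P m y * y * Real.exp (-y)) = 0) ∧
    (∀ n : ℕ, (∫ y in Ioi (0 : ℝ), P n y * P n y * y * Real.exp (-y)) ≠ 0) := by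
  obtain rfl : P = fun n => (laguerreKernel n).eval := by
    ext n x
    rw [hP, laguerreKernel_eval]
  refine ⟨fun n x => ?_, fun n m h => ?_, fun n => ?_⟩
  · simpa only [mul_comm _ (1 + x)] using
      integral_laguerreKernel_mul_comp_affine_mul_exp_neg n (1 + x) x
  · exact integral_laguerreKernel_mul_laguerreKernel_mul_exp_neg_of_ne h
  · exact (integral_eval_mul_eval_mul_mul_exp_neg_pos (laguerreKernel_ne_zero n)).ne'
end

section
/- Let μ ≥ 1 be a real number and define P_1(x) = 1/μ + (√(μ−1)/μ)·x. Then ∫_{−1}^{1} P_1(y) P_1((5/3)y + μx)·(3/2)y² dy = P_1(x) for all real x. The same identity holds with P_1(x) = 1/μ − (√(μ−1)/μ)·x. -/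
/-!
The weight `(3/2) y²` on `(-1, 1)` has vanishing odd moments and moments `1`, `3/5` of order
`2`, `4`. Hence for `P x = 1/μ + c x` the integral equals `1/μ² + c x + c²`, which is `P x`
exactly when `c² = (μ - 1)/μ²`, i.e. for both signs of `c = ±√(μ - 1)/μ`.
-/

open MeasureTheory Set

theorem integral_affine_mul_affine_mul_weight (a b d e : ℝ) :
    ∫ y in Ioo (-1 : ℝ) 1, (a + b * y) * (d + e * y) * ((3 / 2) * y ^ 2)
      = a * d + (3 / 5) * (b * e) := by
  rw [← integral_Ioc_eq_integral_Ioo,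
    ← intervalIntegral.integral_of_le (by norm_num : (-1 : ℝ) ≤ 1)]
  have h_expand : ∀ y : ℝ, (a + b * y) * (d + e * y) * ((3 / 2) * y ^ 2)
      = (3 / 2 * (a * d)) * y ^ 2 + ((3 / 2 * (a * e + b * d)) * y ^ 3
        + (3 / 2 * (b * e)) * y ^ 4) := fun y => by ring
  simp only [h_expand]
  rw [intervalIntegral.integral_add, intervalIntegral.integral_add,
    intervalIntegral.integral_const_mul, intervalIntegral.integral_const_mul,
    intervalIntegral.integral_const_mul, integral_pow, integral_pow, integral_pow]
  · norm_num
    ring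
  all_goals exact (by fun_prop : Continuous _).intervalIntegrable _ _

theorem integral_equation_of_affine (μ c : ℝ) (hμ : μ ≠ 0) (hc : c ^ 2 * μ ^ 2 = μ - 1) (x : ℝ) :
    ∫ y in Ioo (-1 : ℝ) 1, (1 / μ + c * y) * (1 / μ + c * ((5 / 3) * y + μ * x))
        * ((3 / 2) * y ^ 2) = 1 / μ + c * x := by
  have h_affine : ∀ y : ℝ, 1 / μ + c * ((5 / 3) * y + μ * x)
      = (1 / μ + c * μ * x) + (5 / 3 * c) * y := fun y => by ring
  simp only [h_affine, integral_affine_mul_affine_mul_weight]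
  field_simp
  linear_combination hc

/-- Example 1 of Dominici: with `ω(y) = (3/2)y²` on `(-1,1)`, `α(y) = (5/3)y`, `β(y) = μ`,
both `P₁(x) = 1/μ ± (√(μ-1)/μ)x` solve
`∫_{-1}^1 P₁(y) P₁((5/3)y + μx) (3/2)y² dy = P₁(x)`. -/
theorem example_one (μ : ℝ) (hμ : 1 ≤ μ) (P Q : ℝ → ℝ)
    (hP : ∀ x, P x = 1 / μ + (Real.sqrt (μ - 1) / μ) * x)
    (hQ : ∀ x, Q x = 1 / μ - (Real.sqrt (μ - 1) / μ) * x) :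
    (∀ x : ℝ,
      (∫ y in Ioo (-1 : ℝ) 1, P y * P ((5 / 3) * y + μ * x) * ((3 / 2) * y ^ 2)) = P x) ∧
    (∀ x : ℝ,
      (∫ y in Ioo (-1 : ℝ) 1, Q y * Q ((5 / 3) * y + μ * x) * ((3 / 2) * y ^ 2)) = Q x) := by
  have hμ0 : μ ≠ 0 := by positivity
  set c := Real.sqrt (μ - 1) / μ
  have hc : c ^ 2 * μ ^ 2 = μ - 1 := by
    rw [div_pow, Real.sq_sqrt (by linarith), div_mul_cancel₀ _ (pow_ne_zero 2 hμ0)]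
  obtain rfl : P = fun x => 1 / μ + c * x := funext hP
  obtain rfl : Q = fun x => 1 / μ + (-c) * x := funext fun x => by rw [hQ]; ring
  exact ⟨integral_equation_of_affine μ c hμ0 hc, integral_equation_of_affine μ (-c) hμ0 (by simpa)⟩
end

section
/- Let μ ≤ 1 be a real number and define P_1(x) = (1 + √(1−μ))/2 + (5/3)x. Then ∫_{−1}^{1} P_1(y) P_1((3/20)μy + xy)·(3/2)y² dy = P_1(x) for all real x. The same identity holds with P_1(x) = (1 − √(1−μ))/2 + (5/3)x. -/
/-!
For affine `P y = c + a y`, only the second and fourth moments of the even weight `(3/2) y²`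
on `(-1, 1)` survive (they are `1` and `3/5`), so the left-hand side is again affine in `x`.
Matching coefficients forces `a = 5/3` and `c² - c + μ/4 = 0`, whose roots are
`(1 ± √(1 - μ))/2`.
-/

open MeasureTheory Set

theorem setIntegral_Ioo_affine_mul_affine_mul_weight (c a b : ℝ) :
    (∫ y in Ioo (-1 : ℝ) 1, (c + a * y) * (c + a * (b * y)) * ((3 / 2) * y ^ 2))
      = c ^ 2 + 3 / 5 * a ^ 2 * b := by
  rw [← integral_Ioc_eq_integral_Ioo, ← intervalIntegral.integral_of_le (by norm_num)]
  have hF : ∀ y ∈ uIcc (-1 : ℝ) 1, HasDerivAt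
      (fun y => c ^ 2 / 2 * y ^ 3 + 3 / 8 * c * a * (1 + b) * y ^ 4 + 3 / 10 * a ^ 2 * b * y ^ 5)
      ((c + a * y) * (c + a * (b * y)) * ((3 / 2) * y ^ 2)) y := by
    intro y _
    refine ((((hasDerivAt_pow 3 y).const_mul (c ^ 2 / 2)).add
      ((hasDerivAt_pow 4 y).const_mul (3 / 8 * c * a * (1 + b)))).add
      ((hasDerivAt_pow 5 y).const_mul (3 / 10 * a ^ 2 * b))).congr_deriv ?_
    norm_num
    ring
  rw [intervalIntegral.integral_eq_sub_of_hasDerivAt hF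
    ((by fun_prop : Continuous _).intervalIntegrable _ _)]
  ring

theorem setIntegral_Ioo_affine_solution (μ c x : ℝ) (hc : c ^ 2 - c + μ / 4 = 0) :
    (∫ y in Ioo (-1 : ℝ) 1,
      (c + 5 / 3 * y) * (c + 5 / 3 * (3 / 20 * μ * y + x * y)) * ((3 / 2) * y ^ 2))
      = c + 5 / 3 * x := by
  simp_rw [← add_mul]
  rw [setIntegral_Ioo_affine_mul_affine_mul_weight]
  linear_combination hc

theorem half_one_pm_sq_sub_self_add_div_four {μ s : ℝ} (hs : s ^ 2 = 1 - μ) :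
    ((1 + s) / 2) ^ 2 - (1 + s) / 2 + μ / 4 = 0 ∧
      ((1 - s) / 2) ^ 2 - (1 - s) / 2 + μ / 4 = 0 :=
  ⟨by linear_combination hs / 4, by linear_combination hs / 4⟩

/-- Example 2 of Dominici: with `ω(y) = (3/2)y²` on `(-1,1)`, `α(y) = (3/20)μy`, `β(y) = y`,
both `P₁(x) = (1 ± √(1-μ))/2 + (5/3)x` solve
`∫_{-1}^1 P₁(y) P₁((3/20)μy + xy) (3/2)y² dy = P₁(x)`. -/
theorem example_two (μ : ℝ) (hμ : μ ≤ 1) (P Q : ℝ → ℝ)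
    (hP : ∀ x, P x = (1 + Real.sqrt (1 - μ)) / 2 + (5 / 3) * x)
    (hQ : ∀ x, Q x = (1 - Real.sqrt (1 - μ)) / 2 + (5 / 3) * x) :
    (∀ x : ℝ,
      (∫ y in Ioo (-1 : ℝ) 1,
        P y * P ((3 / 20) * μ * y + x * y) * ((3 / 2) * y ^ 2)) = P x) ∧
    (∀ x : ℝ,
      (∫ y in Ioo (-1 : ℝ) 1,
        Q y * Q ((3 / 20) * μ * y + x * y) * ((3 / 2) * y ^ 2)) = Q x) := by
  obtain ⟨hP_root, hQ_root⟩ :=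
    half_one_pm_sq_sub_self_add_div_four (Real.sq_sqrt (sub_nonneg.2 hμ))
  simp only [hP, hQ]
  exact ⟨fun x => setIntegral_Ioo_affine_solution μ _ x hP_root,
    fun x => setIntegral_Ioo_affine_solution μ _ x hQ_root⟩
end

section
/- Let ω be a non-negative integrable function on the interval (a,b) with ∫_a^b ω(y) dy = 1 and with y^k ω(y) integrable on (a,b) for every k ≥ 0. Let ζ ∉ (a,b), let τ, σ be real numbers, and let P_n be a polynomial of degree at most n satisfying ∫_a^b P_n(y) ω(y) dy = 1 and ∫_a^b P_n(y)(y−ζ)^{k+1} ω(y) dy = 0 for all 0 ≤ k ≤ n−1. Then ∫_a^b P_n(y) P_n((y−ζ)(τ+σx) + x) ω(y) dy = P_n(x) for all real x. -/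
open MeasureTheory Set

/-- Core computation in the proof of Theorem 3: a polynomial `Pₙ` of degree at most `n`
with `L_ω[Pₙ] = 1` and vanishing moments `∫ Pₙ(y)(y-ζ)^{k+1} ω(y) dy = 0` for
`0 ≤ k ≤ n-1` solves `∫ Pₙ(y) Pₙ((y-ζ)(τ+σx)+x) ω(y) dy = Pₙ(x)`. -/
theorem integral_eq_of_vanishing_moments (a b : ℝ) (ω : ℝ → ℝ)
    (hω_nonneg : ∀ y ∈ Ioo a b, 0 ≤ ω y)
    (hω_int : IntegrableOn ω (Ioo a b))
    (hω_norm : (∫ y in Ioo a b, ω y) = 1)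
    (h_moments : ∀ k : ℕ, IntegrableOn (fun y => y ^ k * ω y) (Ioo a b))
    (ζ : ℝ) (hζ : ζ ∉ Ioo a b) (τ σ : ℝ) (n : ℕ)
    (P : Polynomial ℝ) (hdeg : P.natDegree ≤ n)
    (hnorm : (∫ y in Ioo a b, P.eval y * ω y) = 1)
    (hmom : ∀ k : ℕ, k < n →
      (∫ y in Ioo a b, P.eval y * (y - ζ) ^ (k + 1) * ω y) = 0) :
    ∀ x : ℝ,
      (∫ y in Ioo a b, P.eval y * P.eval ((y - ζ) * (τ + σ * x) + x) * ω y)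
        = P.eval x := by
  have poly_int : ∀ R : Polynomial ℝ,
      IntegrableOn (fun y => R.eval y * ω y) (Ioo a b) := by
    intro R
    have h : (fun y : ℝ => R.eval y * ω y)
        = fun y => ∑ k ∈ Finset.range (R.natDegree + 1), R.coeff k * (y ^ k * ω y) := by
      funext y
      rw [Polynomial.eval_eq_sum_range, Finset.sum_mul]
      simp [mul_assoc]
    rw [h]
    exact integrable_finset_sum _ (fun k _ => (h_moments k).const_mul _)
  have key : ∀ j : ℕ, IntegrableOn (fun y => P.eval y * (y - ζ) ^ j * ω y) (Ioo a b) := by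
    intro j
    have := poly_int (P * (Polynomial.X - Polynomial.C ζ) ^ j)
    simpa using this
  intro x
  set t := τ + σ * x with ht
  set Q := Polynomial.taylor x P with hQ
  have hQdeg : Q.natDegree < n + 1 := by
    rw [hQ, Polynomial.natDegree_taylor]; omega
  have hrw : ∀ y : ℝ, P.eval y * P.eval ((y - ζ) * t + x) * ω y
      = ∑ j ∈ Finset.range (n + 1),
          (Q.coeff j * t ^ j) * (P.eval y * (y - ζ) ^ j * ω y) := by
    intro y
    have h1 : P.eval ((y - ζ) * t + x) = Q.eval ((y - ζ) * t) := by
      rw [hQ, Polynomial.taylor_eval]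
    rw [h1, Polynomial.eval_eq_sum_range' hQdeg, Finset.mul_sum, Finset.sum_mul]
    apply Finset.sum_congr rfl
    intro j _
    rw [mul_pow]
    ring
  have hint : ∀ j ∈ Finset.range (n + 1),
      IntegrableOn (fun y => (Q.coeff j * t ^ j) * (P.eval y * (y - ζ) ^ j * ω y))
        (Ioo a b) := fun j _ => (key j).const_mul _
  calc (∫ y in Ioo a b, P.eval y * P.eval ((y - ζ) * t + x) * ω y)
      = ∑ j ∈ Finset.range (n + 1),
          (Q.coeff j * t ^ j) * ∫ y in Ioo a b, P.eval y * (y - ζ) ^ j * ω y := by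
        simp_rw [hrw]
        rw [integral_finset_sum _ hint]
        simp_rw [MeasureTheory.integral_const_mul]
    _ = P.eval x := by
        rw [Finset.sum_eq_single 0]
        · have h0 : (∫ y in Ioo a b, P.eval y * (y - ζ) ^ 0 * ω y) = 1 := by
            simpa using hnorm
          simp [h0, hQ, Polynomial.taylor_coeff_zero, hnorm]
        · intro j hj hj0
          obtain ⟨k, rfl⟩ := Nat.exists_eq_succ_of_ne_zero hj0
          have hk : k < n := by have := Finset.mem_range.mp hj; omega
          rw [hmom k hk, mul_zero]
        · intro h
          exact absurd (Finset.mem_range.mpr (Nat.succ_pos n)) h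
end
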